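/- arXiv:2105.03678 — 8 statements merged into one kernel-verified Lean document; each statement's English description precedes it below -/
import Mathlib

section
/- For any vectors x, x* ∈ ℝⁿ and β > 0, the Bregman divergence of the hyperbolic entropy mirror map satisfies the lower bound ‖x - x*‖₂² ≤ 2·sqrt(max{‖x‖_∞², ‖x*‖_∞²} + β²) · D_Φ(x*, x). -/
-- derivative of s ↦ arsinh(s/β)
lemma arsinhc_deriv (β : ℝ) (hβ : 0 < β) (t : ℝ) :
    HasDerivAt (fun s : ℝ => Real.arsinh (s / β)) (1 / Real.sqrt (t ^ 2 + β ^ 2)) t := by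
  have h1 : HasDerivAt (fun s : ℝ => s / β) (1 / β) t := by
    simpa using (hasDerivAt_id t).div_const β
  have h2 := (Real.hasDerivAt_arsinh (t / β)).comp t h1
  have hsq : Real.sqrt (1 + (t / β) ^ 2) = Real.sqrt (t ^ 2 + β ^ 2) / β := by
    rw [show 1 + (t / β) ^ 2 = (t ^ 2 + β ^ 2) / β ^ 2 by field_simp; ring]
    rw [Real.sqrt_div (by positivity), Real.sqrt_sq hβ.le]
  have hpos : 0 < Real.sqrt (t ^ 2 + β ^ 2) := Real.sqrt_pos.2 (by positivity)
  refine h2.congr_deriv ?_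
  rw [hsq]
  field_simp

-- derivative of φ(s) = s·arsinh(s/β) − √(s²+β²) is arsinh(s/β)
lemma phi_deriv (β : ℝ) (hβ : 0 < β) (t : ℝ) :
    HasDerivAt (fun s : ℝ => s * Real.arsinh (s / β) - Real.sqrt (s ^ 2 + β ^ 2))
      (Real.arsinh (t / β)) t := by
  have hpos : (0:ℝ) < t ^ 2 + β ^ 2 := by positivity
  have hspos : 0 < Real.sqrt (t ^ 2 + β ^ 2) := Real.sqrt_pos.2 hpos
  have h3 : HasDerivAt (fun s : ℝ => s * Real.arsinh (s / β))
      (1 * Real.arsinh (t / β) + t * (1 / Real.sqrt (t ^ 2 + β ^ 2))) t :=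
    (hasDerivAt_id t).mul (arsinhc_deriv β hβ t)
  have h4 : HasDerivAt (fun s : ℝ => s ^ 2 + β ^ 2) (2 * t) t := by
    simpa using (hasDerivAt_pow 2 t).add_const (β ^ 2)
  have h5 := (Real.hasDerivAt_sqrt hpos.ne').comp t h4
  refine (h3.sub h5).congr_deriv ?_
  field_simp
  ring

-- key pointwise inequality
lemma key_ineq (β M a b : ℝ) (hβ : 0 < β) (hM : 0 < M)
    (ha : a ^ 2 + β ^ 2 ≤ M ^ 2) (hb : b ^ 2 + β ^ 2 ≤ M ^ 2) :
    (a - b) ^ 2 ≤ 2 * M *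
      ((b * Real.arsinh (b / β) - Real.sqrt (b ^ 2 + β ^ 2)) -
       (a * Real.arsinh (a / β) - Real.sqrt (a ^ 2 + β ^ 2)) -
       Real.arsinh (a / β) * (b - a)) := by
  set r : ℝ := Real.sqrt (M ^ 2 - β ^ 2) with hr
  have hr2 : r ^ 2 = M ^ 2 - β ^ 2 := Real.sq_sqrt (by nlinarith [sq_nonneg a])
  have hrnn : 0 ≤ r := Real.sqrt_nonneg _
  have habs : ∀ c : ℝ, c ^ 2 + β ^ 2 ≤ M ^ 2 → c ∈ Set.Icc (-r) r := by
    intro c hc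
    constructor <;> nlinarith [sq_nonneg (c - r), sq_nonneg (c + r)]
  have haI := habs a ha
  have hbI := habs b hb
  -- G(s) = arsinh(s/β) - s/M is monotone on [-r, r]
  set G : ℝ → ℝ := fun s => Real.arsinh (s / β) - s / M with hG
  have hGd : ∀ s : ℝ, HasDerivAt G (1 / Real.sqrt (s ^ 2 + β ^ 2) - 1 / M) s := by
    intro s
    exact (arsinhc_deriv β hβ s).sub (by simpa using (hasDerivAt_id s).div_const M)
  have hGmono : MonotoneOn G (Set.Icc (-r) r) := by
    apply monotoneOn_of_deriv_nonneg (convex_Icc _ _)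
      (fun s _ => ((hGd s).continuousAt.continuousWithinAt))
      (fun s _ => ((hGd s).differentiableAt.differentiableWithinAt))
    intro s hs
    rw [(hGd s).deriv]
    rw [interior_Icc] at hs
    have hs2 : s ^ 2 + β ^ 2 ≤ M ^ 2 := by
      have : s ^ 2 ≤ r ^ 2 := by nlinarith [hs.1, hs.2]
      nlinarith
    have h1 : Real.sqrt (s ^ 2 + β ^ 2) ≤ M := by
      rw [show M = Real.sqrt (M ^ 2) from (Real.sqrt_sq hM.le).symm]
      exact Real.sqrt_le_sqrt hs2
    have h2 : 0 < Real.sqrt (s ^ 2 + β ^ 2) := Real.sqrt_pos.2 (by positivity)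
    have := one_div_le_one_div_of_le h2 h1
    linarith
  -- F(s) = φ(s) - arsinh(a/β)·s - (s-a)²/(2M)
  set F : ℝ → ℝ := fun s => (s * Real.arsinh (s / β) - Real.sqrt (s ^ 2 + β ^ 2))
      - Real.arsinh (a / β) * s - (s - a) ^ 2 / (2 * M) with hF
  have hFd : ∀ s : ℝ, HasDerivAt F (G s - G a) s := by
    intro s
    have hq : HasDerivAt (fun s : ℝ => (s - a) ^ 2 / (2 * M)) ((s - a) / M) s := by
      have := (((hasDerivAt_id s).sub_const a).pow 2).div_const (2 * M)
      refine this.congr_deriv ?_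
      field_simp
      simp only [id_eq]
      ring
    have hl : HasDerivAt (fun s : ℝ => Real.arsinh (a / β) * s) (Real.arsinh (a / β)) s := by
      simpa using (hasDerivAt_id s).const_mul (Real.arsinh (a / β))
    have := ((phi_deriv β hβ s).sub hl).sub hq
    refine this.congr_deriv ?_
    simp only [hG]
    ring
  have hFab : F a ≤ F b := by
    rcases le_total a b with hab | hab
    · have hmono : MonotoneOn F (Set.Icc a b) := by
        apply monotoneOn_of_deriv_nonneg (convex_Icc _ _)
          (fun s _ => ((hFd s).continuousAt.continuousWithinAt))
          (fun s _ => ((hFd s).differentiableAt.differentiableWithinAt))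
        intro s hs
        rw [(hFd s).deriv]
        rw [interior_Icc] at hs
        have hsI : s ∈ Set.Icc (-r) r :=
          ⟨le_trans haI.1 hs.1.le, le_trans hs.2.le hbI.2⟩
        have := hGmono haI hsI hs.1.le
        linarith
      exact hmono (Set.left_mem_Icc.2 hab) (Set.right_mem_Icc.2 hab) hab
    · have hmono : AntitoneOn F (Set.Icc b a) := by
        apply antitoneOn_of_deriv_nonpos (convex_Icc _ _)
          (fun s _ => ((hFd s).continuousAt.continuousWithinAt))
          (fun s _ => ((hFd s).differentiableAt.differentiableWithinAt))
        intro s hs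
        rw [(hFd s).deriv]
        rw [interior_Icc] at hs
        have hsI : s ∈ Set.Icc (-r) r :=
          ⟨le_trans hbI.1 hs.1.le, le_trans hs.2.le haI.2⟩
        have := hGmono hsI haI hs.2.le
        linarith
      exact hmono (Set.left_mem_Icc.2 hab) (Set.right_mem_Icc.2 hab) hab
  simp only [hF] at hFab
  have h2M : (0:ℝ) < 2 * M := by linarith
  have hD : (b - a) ^ 2 / (2 * M) ≤
      (b * Real.arsinh (b / β) - Real.sqrt (b ^ 2 + β ^ 2)) -
      (a * Real.arsinh (a / β) - Real.sqrt (a ^ 2 + β ^ 2)) -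
      Real.arsinh (a / β) * (b - a) := by
    have h0 : (a - a) ^ 2 / (2 * M) = 0 := by simp
    linarith [hFab, h0]
  rw [div_le_iff₀ h2M] at hD
  nlinarith [hD]

/-- Lower bound relating the squared Euclidean distance to the hyperbolic-entropy
Bregman divergence. -/
theorem stmt1 (n : ℕ) (hn : 0 < n) (β : ℝ) (hβ : 0 < β) (xstar x : Fin n → ℝ) :
    ∑ i, (x i - xstar i)^2 ≤
      2 * Real.sqrt (max (⨆ i, (x i)^2) (⨆ i, (xstar i)^2) + β^2) *
        ((∑ i, (xstar i * Real.arsinh (xstar i / β) - Real.sqrt ((xstar i)^2 + β^2))) -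
         (∑ i, (x i * Real.arsinh (x i / β) - Real.sqrt ((x i)^2 + β^2))) -
         ∑ i, Real.arsinh (x i / β) * (xstar i - x i)) := by
  haveI : Nonempty (Fin n) := ⟨⟨0, hn⟩⟩
  set S : ℝ := max (⨆ i, (x i)^2) (⨆ i, (xstar i)^2) with hS
  have hS0 : 0 ≤ S := by
    have h1 := le_ciSup (f := fun i => (x i) ^ 2)
      (Set.Finite.bddAbove (Set.finite_range _)) (Classical.arbitrary (Fin n))
    exact le_trans (sq_nonneg _) (le_trans h1 (le_max_left _ _))
  set M : ℝ := Real.sqrt (S + β ^ 2) with hMdef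
  have hM2 : M ^ 2 = S + β ^ 2 := Real.sq_sqrt (by positivity)
  have hM : 0 < M := Real.sqrt_pos.2 (by positivity)
  have hx : ∀ i, (x i) ^ 2 + β ^ 2 ≤ M ^ 2 := fun i => by
    have h1 : (x i) ^ 2 ≤ ⨆ i, (x i) ^ 2 :=
      le_ciSup (f := fun i => (x i) ^ 2) (Set.Finite.bddAbove (Set.finite_range _)) i
    have h2 : (⨆ i, (x i) ^ 2) ≤ S := le_max_left _ _
    nlinarith
  have hxs : ∀ i, (xstar i) ^ 2 + β ^ 2 ≤ M ^ 2 := fun i => by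
    have h1 : (xstar i) ^ 2 ≤ ⨆ i, (xstar i) ^ 2 :=
      le_ciSup (f := fun i => (xstar i) ^ 2) (Set.Finite.bddAbove (Set.finite_range _)) i
    have h2 : (⨆ i, (xstar i) ^ 2) ≤ S := le_max_right _ _
    nlinarith
  rw [← Finset.sum_sub_distrib, ← Finset.sum_sub_distrib, Finset.mul_sum]
  exact Finset.sum_le_sum fun i _ => key_ineq β M (x i) (xstar i) hβ hM (hx i) (hxs i)
end

section
/- Let x* ∈ ℝⁿ be k-sparse with support S and min_{i ∈ S} |x*_i| ≥ c⋆ ‖x*‖₂ / √k for a constant c⋆ > 0. If x ∈ ℝⁿ satisfies x_i x*_i ≥ 0 and |x_i| ≥ |x*_i|/2 for all i, then the hyperbolic-entropy Bregman divergence satisfies D_Φ(x*, x) ≤ (√k / (c⋆ ‖x*‖₂)) · ‖x_S - x*_S‖₂² + ‖x_{S^c}‖₁. -/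
private lemma hasDerivAt_arsinh_div (β : ℝ) (hβ : 0 < β) (t : ℝ) :
    HasDerivAt (fun u => Real.arsinh (u / β)) (1 / Real.sqrt (β ^ 2 + t ^ 2)) t := by
  have h := (Real.hasDerivAt_arsinh (t / β)).comp t ((hasDerivAt_id t).div_const β)
  refine h.congr_deriv ?_
  have h1 : Real.sqrt (β ^ 2 + t ^ 2) = β * Real.sqrt (1 + (t / β) ^ 2) := by
    rw [← Real.sqrt_sq hβ.le, ← Real.sqrt_mul (by positivity)]
    congr 1
    field_simp
    rw [Real.sq_sqrt (by positivity)]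
  rw [h1]
  ring

private lemma arsinh_lip (β m : ℝ) (hβ : 0 < β) (hm : 0 < m) {s t : ℝ}
    (hs : m ≤ s) (hst : s ≤ t) :
    Real.arsinh (t / β) - Real.arsinh (s / β) ≤ (t - s) / m := by
  have key : ∀ u : ℝ, HasDerivAt (fun v => v / m - Real.arsinh (v / β))
      (1 / m - 1 / Real.sqrt (β ^ 2 + u ^ 2)) u := by
    intro u
    have := ((hasDerivAt_id u).div_const m).sub (hasDerivAt_arsinh_div β hβ u)
    exact this.congr_deriv (by ring)
  have mono : MonotoneOn (fun v => v / m - Real.arsinh (v / β)) (Set.Icc s t) := by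
    apply monotoneOn_of_deriv_nonneg (convex_Icc s t)
    · exact fun u _ => (key u).differentiableAt.continuousAt.continuousWithinAt
    · exact fun u hu => (key u).differentiableAt.differentiableWithinAt
    · intro u hu
      rw [(key u).deriv]
      rw [interior_Icc] at hu
      have hu' : m ≤ u := le_trans hs hu.1.le
      have h2 : m ≤ Real.sqrt (β ^ 2 + u ^ 2) := by
        calc m ≤ u := hu'
        _ = Real.sqrt (u ^ 2) := (Real.sqrt_sq (by linarith)).symm
        _ ≤ Real.sqrt (β ^ 2 + u ^ 2) := Real.sqrt_le_sqrt (by nlinarith)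
      have := one_div_le_one_div_of_le hm h2
      linarith
  have h := mono (Set.left_mem_Icc.2 hst) (Set.right_mem_Icc.2 hst) hst
  simp only at h
  have e : (t - s) / m = t / m - s / m := by ring
  linarith

private lemma bregman_scalar (β m b : ℝ) (hβ : 0 < β) (hm : 0 < m) (hb : m ≤ b)
    {a : ℝ} (ha : m ≤ a) :
    (a * Real.arsinh (a / β) - Real.sqrt (a ^ 2 + β ^ 2))
      - (b * Real.arsinh (b / β) - Real.sqrt (b ^ 2 + β ^ 2))
      - Real.arsinh (b / β) * (a - b) ≤ (a - b) ^ 2 / (2 * m) := by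
  set g : ℝ → ℝ := fun t => (t - b) ^ 2 / (2 * m) -
    ((t * Real.arsinh (t / β) - Real.sqrt (t ^ 2 + β ^ 2))
      - (b * Real.arsinh (b / β) - Real.sqrt (b ^ 2 + β ^ 2))
      - Real.arsinh (b / β) * (t - b)) with hg
  have key : ∀ u : ℝ, HasDerivAt g
      ((u - b) / m - (Real.arsinh (u / β) - Real.arsinh (b / β))) u := by
    intro u
    have h1 : HasDerivAt (fun t : ℝ => (t - b) ^ 2 / (2 * m)) ((u - b) / m) u := by
      have := (((hasDerivAt_id u).sub_const b).pow 2).div_const (2 * m)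
      refine this.congr_deriv ?_
      simp only [id_eq]
      field_simp
      ring
    have hne : Real.sqrt (u ^ 2 + β ^ 2) ≠ 0 := by positivity
    have hsqrt : HasDerivAt (fun t : ℝ => Real.sqrt (t ^ 2 + β ^ 2))
        (u / Real.sqrt (u ^ 2 + β ^ 2)) u := by
      have h0 : HasDerivAt (fun t : ℝ => t ^ 2 + β ^ 2) (2 * u) u := by
        simpa using (hasDerivAt_pow 2 u).add_const (β ^ 2)
      have := (Real.hasDerivAt_sqrt (by positivity : u ^ 2 + β ^ 2 ≠ 0)).comp u h0
      refine this.congr_deriv ?_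
      field_simp
    have hars := hasDerivAt_arsinh_div β hβ u
    have hmul : HasDerivAt (fun t : ℝ => t * Real.arsinh (t / β))
        (Real.arsinh (u / β) + u * (1 / Real.sqrt (β ^ 2 + u ^ 2))) u := by
      have hh := HasDerivAt.mul (hasDerivAt_id u) hars
      simp only [id_eq, one_mul] at hh
      exact hh
    have hphi : HasDerivAt (fun t : ℝ => t * Real.arsinh (t / β) - Real.sqrt (t ^ 2 + β ^ 2))
        (Real.arsinh (u / β)) u := by
      have hh := hmul.sub hsqrt
      refine hh.congr_deriv ?_
      rw [show (β : ℝ) ^ 2 + u ^ 2 = u ^ 2 + β ^ 2 from by ring]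
      field_simp
      ring
    have hlin : HasDerivAt (fun t : ℝ => Real.arsinh (b / β) * (t - b))
        (Real.arsinh (b / β)) u := by
      simpa using (HasDerivAt.const_mul (Real.arsinh (b / β)) ((hasDerivAt_id u).sub_const b))
    have := h1.sub (((hphi.sub_const
      (b * Real.arsinh (b / β) - Real.sqrt (b ^ 2 + β ^ 2)))).sub hlin)
    exact this
  have hgb : g b = 0 := by simp [hg]
  rcases le_total b a with hab | hab
  · have mono : MonotoneOn g (Set.Icc b a) := by
      apply monotoneOn_of_deriv_nonneg (convex_Icc b a)
        (fun u _ => (key u).differentiableAt.continuousAt.continuousWithinAt)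
        (fun u hu => (key u).differentiableAt.differentiableWithinAt)
      intro u hu
      rw [(key u).deriv]
      rw [interior_Icc] at hu
      have := arsinh_lip β m hβ hm hb hu.1.le
      linarith
    have h := mono (Set.left_mem_Icc.2 hab) (Set.right_mem_Icc.2 hab) hab
    rw [hgb] at h
    rw [hg] at h
    simp only at h
    linarith
  · have anti : AntitoneOn g (Set.Icc a b) := by
      apply antitoneOn_of_deriv_nonpos (convex_Icc a b)
        (fun u _ => (key u).differentiableAt.continuousAt.continuousWithinAt)
        (fun u hu => (key u).differentiableAt.differentiableWithinAt)
      intro u hu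
      rw [(key u).deriv]
      rw [interior_Icc] at hu
      have hmu : m ≤ u := le_trans ha hu.1.le
      have := arsinh_lip β m hβ hm hmu hu.2.le
      have e : (b - u) / m = -((u - b) / m) := by ring
      linarith
    have h := anti (Set.left_mem_Icc.2 hab) (Set.right_mem_Icc.2 hab) hab
    rw [hgb] at h
    rw [hg] at h
    simp only at h
    linarith

private lemma coord_S (β : ℝ) (hβ : 0 < β) {a b : ℝ} (ha : a ≠ 0)
    (hsign : 0 ≤ b * a) (hhalf : |a| / 2 ≤ |b|) :
    (a * Real.arsinh (a / β) - Real.sqrt (a ^ 2 + β ^ 2))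
      - (b * Real.arsinh (b / β) - Real.sqrt (b ^ 2 + β ^ 2))
      - Real.arsinh (b / β) * (a - b) ≤ (b - a) ^ 2 / |a| := by
  have hm : 0 < |a| / 2 := by
    have := abs_pos.mpr ha
    linarith
  rcases ha.lt_or_gt with hneg | hpos
  · have hb : b ≤ 0 := by nlinarith
    have habs : |a| = -a := abs_of_neg hneg
    have hbabs : |b| = -b := abs_of_nonpos hb
    have h1 : |a| / 2 ≤ -a := by rw [habs]; linarith [abs_pos.mpr ha, habs]
    have h2 : |a| / 2 ≤ -b := by rw [← hbabs]; exact hhalf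
    have eqn : (a * Real.arsinh (a / β) - Real.sqrt (a ^ 2 + β ^ 2))
          - (b * Real.arsinh (b / β) - Real.sqrt (b ^ 2 + β ^ 2))
          - Real.arsinh (b / β) * (a - b)
        = ((-a) * Real.arsinh ((-a) / β) - Real.sqrt ((-a) ^ 2 + β ^ 2))
          - ((-b) * Real.arsinh ((-b) / β) - Real.sqrt ((-b) ^ 2 + β ^ 2))
          - Real.arsinh ((-b) / β) * ((-a) - (-b)) := by
      simp only [neg_div, Real.arsinh_neg, neg_sq]
      ring
    have eqn2 : (b - a) ^ 2 / |a| = ((-a) - (-b)) ^ 2 / (2 * (|a| / 2)) := by ring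
    rw [eqn, eqn2]
    exact bregman_scalar β (|a| / 2) (-b) hβ hm h2 h1
  · have hb : 0 ≤ b := by nlinarith
    have habs : |a| = a := abs_of_pos hpos
    have h1 : |a| / 2 ≤ a := by rw [habs]; linarith
    have h2 : |a| / 2 ≤ b := by rw [← abs_of_nonneg hb]; exact hhalf
    have eqn2 : (b - a) ^ 2 / |a| = (a - b) ^ 2 / (2 * (|a| / 2)) := by ring
    rw [eqn2]
    exact bregman_scalar β (|a| / 2) b hβ hm h2 h1

private lemma coord_Sc (β : ℝ) (hβ : 0 < β) (b : ℝ) :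
    ((0:ℝ) * Real.arsinh (0 / β) - Real.sqrt ((0:ℝ) ^ 2 + β ^ 2))
      - (b * Real.arsinh (b / β) - Real.sqrt (b ^ 2 + β ^ 2))
      - Real.arsinh (b / β) * (0 - b) ≤ |b| := by
  have h1 : Real.sqrt ((0:ℝ) ^ 2 + β ^ 2) = β := by
    rw [show (0:ℝ) ^ 2 + β ^ 2 = β ^ 2 by ring, Real.sqrt_sq hβ.le]
  have h2 : Real.sqrt (b ^ 2 + β ^ 2) ≤ |b| + β := by
    rw [← Real.sqrt_sq (by positivity : (0:ℝ) ≤ |b| + β)]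
    apply Real.sqrt_le_sqrt
    nlinarith [sq_abs b, abs_nonneg b]
  have e : ((0:ℝ) * Real.arsinh (0 / β) - Real.sqrt ((0:ℝ) ^ 2 + β ^ 2))
      - (b * Real.arsinh (b / β) - Real.sqrt (b ^ 2 + β ^ 2))
      - Real.arsinh (b / β) * (0 - b)
      = Real.sqrt (b ^ 2 + β ^ 2) - Real.sqrt ((0:ℝ) ^ 2 + β ^ 2) := by ring
  rw [e, h1]
  linarith

/-- Upper bound on the hyperbolic-entropy Bregman divergence for sign-consistent vectors
with not-too-small support coordinates. -/
theorem stmt2 (n k : ℕ) (β cstar : ℝ) (hβ : 0 < β) (hc : 0 < cstar)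
    (xstar x : Fin n → ℝ)
    (S : Finset (Fin n)) (hS : S = Finset.univ.filter (fun i => xstar i ≠ 0))
    (hk : S.card = k)
    (hmin : ∀ i ∈ S, cstar * Real.sqrt (∑ j, (xstar j)^2) / Real.sqrt k ≤ |xstar i|)
    (hsign : ∀ i, 0 ≤ x i * xstar i)
    (hhalf : ∀ i, |xstar i| / 2 ≤ |x i|) :
    (∑ i, (xstar i * Real.arsinh (xstar i / β) - Real.sqrt ((xstar i)^2 + β^2))) -
      (∑ i, (x i * Real.arsinh (x i / β) - Real.sqrt ((x i)^2 + β^2))) -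
      (∑ i, Real.arsinh (x i / β) * (xstar i - x i))
    ≤ Real.sqrt k / (cstar * Real.sqrt (∑ j, (xstar j)^2)) * ∑ i ∈ S, (x i - xstar i)^2
      + ∑ i ∈ Sᶜ, |x i| := by
  classical
  set N := Real.sqrt (∑ j, (xstar j) ^ 2) with hN
  set f : Fin n → ℝ := fun i =>
    (xstar i * Real.arsinh (xstar i / β) - Real.sqrt ((xstar i) ^ 2 + β ^ 2))
      - (x i * Real.arsinh (x i / β) - Real.sqrt ((x i) ^ 2 + β ^ 2))
      - Real.arsinh (x i / β) * (xstar i - x i) with hf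
  have hLHS : (∑ i, (xstar i * Real.arsinh (xstar i / β) - Real.sqrt ((xstar i)^2 + β^2))) -
      (∑ i, (x i * Real.arsinh (x i / β) - Real.sqrt ((x i)^2 + β^2))) -
      (∑ i, Real.arsinh (x i / β) * (xstar i - x i)) = ∑ i, f i := by
    rw [← Finset.sum_sub_distrib, ← Finset.sum_sub_distrib]
  rw [hLHS, ← Finset.sum_add_sum_compl S f]
  have hb1 : ∑ i ∈ S, f i ≤ Real.sqrt k / (cstar * N) * ∑ i ∈ S, (x i - xstar i) ^ 2 := by
    rw [Finset.mul_sum]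
    apply Finset.sum_le_sum
    intro i hi
    have hne : xstar i ≠ 0 := by
      rw [hS] at hi
      simpa using (Finset.mem_filter.mp hi).2
    have hNpos : 0 < N := by
      apply Real.sqrt_pos.mpr
      have hle : (xstar i) ^ 2 ≤ ∑ j, (xstar j) ^ 2 :=
        Finset.single_le_sum (fun j _ => sq_nonneg (xstar j)) (Finset.mem_univ i)
      have hpos : 0 < (xstar i) ^ 2 := (sq_nonneg _).lt_of_ne (Ne.symm (pow_ne_zero 2 hne))
      linarith
    have hkpos : 0 < (k : ℝ) := by
      have hcard : 0 < S.card := Finset.card_pos.mpr ⟨i, hi⟩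
      rw [hk] at hcard
      exact_mod_cast hcard
    have hskpos : 0 < Real.sqrt k := Real.sqrt_pos.mpr hkpos
    have hmin' := hmin i hi
    have hcN : 0 < cstar * N := mul_pos hc hNpos
    have hfrac : 0 < cstar * N / Real.sqrt k := div_pos hcN hskpos
    have h3 : f i ≤ (x i - xstar i) ^ 2 / |xstar i| :=
      coord_S β hβ hne (hsign i) (hhalf i)
    have h4 : (x i - xstar i) ^ 2 / |xstar i|
        ≤ (x i - xstar i) ^ 2 / (cstar * N / Real.sqrt k) := by
      gcongr
    have h5 : (x i - xstar i) ^ 2 / (cstar * N / Real.sqrt k)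
        = Real.sqrt k / (cstar * N) * (x i - xstar i) ^ 2 := by
      rw [div_div_eq_mul_div]
      ring
    linarith
  have hb2 : ∑ i ∈ Sᶜ, f i ≤ ∑ i ∈ Sᶜ, |x i| := by
    apply Finset.sum_le_sum
    intro i hi
    have hz : xstar i = 0 := by
      rw [Finset.mem_compl, hS] at hi
      simpa using hi
    have h := coord_Sc β hβ (x i)
    simp only [hf, hz]
    exact h
  exact add_le_add hb1 hb2
end

section
/- The population gradient of the phase retrieval empirical risk equals ∇f(x) = (3‖x‖₂² - ‖x*‖₂²)·x - 2(xᵀx*)·x*, where f(x) = E[((Aᵀx)² - (Aᵀx*)² - ε)² / 4] with A ~ N(0, I_n) standard Gaussian and ε a centered random variable independent of A. -/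
open MeasureTheory ProbabilityTheory Real

noncomputable section

namespace PhaseAux

lemma gauss_eq_density : gaussianReal 0 1 = volume.withDensity (gaussianPDF 0 1) :=
  gaussianReal_of_var_ne_zero 0 one_ne_zero

lemma pdf_eq (x : ℝ) :
    gaussianPDFReal 0 1 x = (Real.sqrt (2 * π))⁻¹ * Real.exp (-(1/2) * x ^ 2) := by
  rw [gaussianPDFReal]
  norm_num
  exact Or.inl (by ring)

lemma integral_gauss (g : ℝ → ℝ) :
    ∫ x, g x ∂(gaussianReal 0 1) = ∫ x, gaussianPDFReal 0 1 x * g x := by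
  rw [gauss_eq_density]
  have h : (gaussianPDF 0 1) = fun x => ((gaussianPDFReal 0 1 x).toNNReal : ENNReal) := rfl
  rw [h, integral_withDensity_eq_integral_smul ((measurable_gaussianPDFReal 0 1).real_toNNReal) g]
  congr 1
  funext x
  simp [NNReal.smul_def, Real.coe_toNNReal _ (gaussianPDFReal_nonneg 0 1 x)]

lemma integrable_gauss_iff (g : ℝ → ℝ) :
    Integrable g (gaussianReal 0 1) ↔
      Integrable (fun x => gaussianPDFReal 0 1 x * g x) volume := by
  rw [gauss_eq_density]
  have h : (gaussianPDF 0 1) = fun x => ((gaussianPDFReal 0 1 x).toNNReal : ENNReal) := rfl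
  rw [h, integrable_withDensity_iff_integrable_smul ((measurable_gaussianPDFReal 0 1).real_toNNReal)]
  constructor <;> intro h2 <;> apply h2.congr <;> filter_upwards with x <;>
    simp [NNReal.smul_def, Real.coe_toNNReal _ (gaussianPDFReal_nonneg 0 1 x)]

lemma integrable_pow_gauss (k : ℕ) : Integrable (fun t => t ^ k) (gaussianReal 0 1) := by
  rw [integrable_gauss_iff]
  have h : ∀ x : ℝ, gaussianPDFReal 0 1 x * x ^ k
      = (Real.sqrt (2 * π))⁻¹ * (x ^ ((k : ℝ)) * Real.exp (-(1/2) * x ^ 2)) := by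
    intro x
    rw [pdf_eq, Real.rpow_natCast]
    ring
  simp_rw [h]
  exact (integrable_rpow_mul_exp_neg_mul_sq (by norm_num)
    (lt_of_lt_of_le (by norm_num) (Nat.cast_nonneg k))).const_mul _

lemma gauss_neg_inv :
    Measure.map (fun x : ℝ => -x) (gaussianReal 0 1) = gaussianReal 0 1 := by
  have h := gaussianReal_map_const_mul (μ := 0) (v := 1) (-1)
  simp only [neg_one_mul, mul_zero] at h
  convert h using 2
  ext
  norm_num

lemma gauss_moment_odd (k : ℕ) (hk : Odd k) : ∫ t, t ^ k ∂(gaussianReal 0 1) = 0 := by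
  have h1 : ∫ t, t ^ k ∂(gaussianReal 0 1) = ∫ t, (-t) ^ k ∂(gaussianReal 0 1) := by
    conv_lhs => rw [← gauss_neg_inv]
    rw [integral_map (by fun_prop) (by fun_prop)]
  rw [funext fun t => hk.neg_pow t] at h1
  rw [integral_neg] at h1
  linarith

lemma J_even (k : ℕ) :
    ∫ x : ℝ, x ^ (2 * k) * Real.exp (-(1/2) * x ^ 2)
      = 2 * ((1/2 : ℝ) ^ (-(((2 * k : ℕ) : ℝ) + 1)/2) * (1/2) * Real.Gamma ((((2 * k : ℕ) : ℝ) + 1)/2)) := by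
  have h1 : (fun x : ℝ => x ^ (2 * k) * Real.exp (-(1/2) * x ^ 2))
      = fun x : ℝ => (fun t : ℝ => t ^ (2 * k) * Real.exp (-(1/2) * t ^ 2)) |x| := by
    funext x
    simp only [pow_mul, sq_abs]
  rw [h1, integral_comp_abs (f := fun t : ℝ => t ^ (2 * k) * Real.exp (-(1/2) * t ^ 2))]
  have h2 : ∀ x ∈ Set.Ioi (0:ℝ), x ^ (2 * k) * Real.exp (-(1/2) * x ^ 2)
      = x ^ (((2 * k : ℕ) : ℝ)) * Real.exp (-(1/2) * x ^ ((2:ℕ) : ℝ)) := by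
    intro x _
    rw [Real.rpow_natCast, Real.rpow_natCast]
  rw [setIntegral_congr_fun measurableSet_Ioi h2]
  have h3 := integral_rpow_mul_exp_neg_mul_rpow (p := ((2:ℕ):ℝ)) (q := ((2*k : ℕ) : ℝ))
    (b := 1/2) (by norm_num) (lt_of_lt_of_le (by norm_num) (Nat.cast_nonneg _)) (by norm_num)
  rw [h3]
  norm_num

lemma gauss_moment_zero : ∫ t, t ^ 0 ∂(gaussianReal 0 1) = 1 := by simp

lemma sqrt_two_pi_eq : Real.sqrt (2 * π) = (2:ℝ) ^ ((1:ℝ)/2) * Real.sqrt π := by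
  rw [Real.sqrt_mul (by norm_num) π, Real.sqrt_eq_rpow]

lemma gauss_moment_two : ∫ t, t ^ 2 ∂(gaussianReal 0 1) = 1 := by
  rw [integral_gauss]
  have h : ∀ x : ℝ, gaussianPDFReal 0 1 x * x ^ 2
      = (Real.sqrt (2 * π))⁻¹ * (x ^ (2 * 1) * Real.exp (-(1/2) * x ^ 2)) := by
    intro x; rw [pdf_eq]; ring_nf
  simp_rw [h]
  rw [integral_const_mul, J_even 1]
  have e1 : ((2 * 1 : ℕ) : ℝ) = 2 := by norm_num
  rw [e1]
  have e2 : ((2:ℝ) + 1)/2 = 1/2 + 1 := by norm_num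
  rw [e2, Real.Gamma_add_one (by norm_num), Real.Gamma_one_half_eq]
  have e3 : ((1:ℝ)/2) ^ (-((2:ℝ) + 1)/2) = 2 * (2:ℝ) ^ ((1:ℝ)/2) := by
    rw [one_div, Real.inv_rpow (by norm_num), ← Real.rpow_neg (by norm_num)]
    norm_num
    rw [show (3:ℝ)/2 = 1 + 1/2 by norm_num, Real.rpow_add (by norm_num), Real.rpow_one]
  rw [e3, sqrt_two_pi_eq]
  have hs : Real.sqrt π > 0 := Real.sqrt_pos.mpr Real.pi_pos
  have ht : (2:ℝ) ^ ((1:ℝ)/2) > 0 := Real.rpow_pos_of_pos (by norm_num) _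
  field_simp

lemma gauss_moment_four : ∫ t, t ^ 4 ∂(gaussianReal 0 1) = 3 := by
  rw [integral_gauss]
  have h : ∀ x : ℝ, gaussianPDFReal 0 1 x * x ^ 4
      = (Real.sqrt (2 * π))⁻¹ * (x ^ (2 * 2) * Real.exp (-(1/2) * x ^ 2)) := by
    intro x; rw [pdf_eq]; ring_nf
  simp_rw [h]
  rw [integral_const_mul, J_even 2]
  have e1 : ((2 * 2 : ℕ) : ℝ) = 4 := by norm_num
  rw [e1]
  have e2 : ((4:ℝ) + 1)/2 = (1/2 + 1) + 1 := by norm_num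
  rw [e2, Real.Gamma_add_one (by norm_num), Real.Gamma_add_one (by norm_num),
    Real.Gamma_one_half_eq]
  have e3 : ((1:ℝ)/2) ^ (-((4:ℝ) + 1)/2) = 4 * (2:ℝ) ^ ((1:ℝ)/2) := by
    rw [one_div, Real.inv_rpow (by norm_num), ← Real.rpow_neg (by norm_num)]
    norm_num
    rw [show (5:ℝ)/2 = 2 + 1/2 by norm_num, Real.rpow_add (by norm_num),
      show ((2:ℝ) ^ (2:ℝ) = 4) by
        rw [show (2:ℝ) = ((2:ℕ):ℝ) by norm_num, Real.rpow_natCast]; norm_num]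
  rw [e3, sqrt_two_pi_eq]
  have hs : Real.sqrt π > 0 := Real.sqrt_pos.mpr Real.pi_pos
  have ht : (2:ℝ) ^ ((1:ℝ)/2) > 0 := Real.rpow_pos_of_pos (by norm_num) _
  field_simp
  ring



section PiPart

lemma integrable_pi_prod : ∀ {n : ℕ} {f : Fin n → ℝ → ℝ},
    (∀ i, Integrable (f i) (gaussianReal 0 1)) →
    Integrable (fun x : Fin n → ℝ => ∏ i, f i (x i))
      (Measure.pi fun _ => gaussianReal 0 1) := by
  intro n
  induction n with
  | zero =>
      intro f _
      simp only [Finset.univ_eq_empty, Finset.prod_empty]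
      exact integrable_const _
  | succ n ih =>
      intro f hf
      have A := ((measurePreserving_piFinSuccAbove (fun _ : Fin (n+1) => gaussianReal 0 1) 0).symm)
      rw [← A.integrable_comp_emb (MeasurableEquiv.measurableEmbedding _)]
      simp_rw [MeasurableEquiv.piFinSuccAbove_symm_apply, Fin.insertNthEquiv,
        Fin.prod_univ_succ, Fin.insertNth_zero]
      simp only [Fin.zero_succAbove, Function.comp_def, Fin.cons_zero, Fin.cons_succ,
        Equiv.coe_fn_mk]
      exact Integrable.mul_prod (hf 0) (ih (fun i => hf _))

lemma integral_pi_prod : ∀ {n : ℕ} (f : Fin n → ℝ → ℝ),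
    ∫ x : Fin n → ℝ, ∏ i, f i (x i) ∂(Measure.pi fun _ => gaussianReal 0 1)
      = ∏ i, ∫ t, f i t ∂(gaussianReal 0 1) := by
  intro n
  induction n with
  | zero => intro f; simp
  | succ n ih =>
      intro f
      calc ∫ x : Fin (n+1) → ℝ, ∏ i, f i (x i) ∂(Measure.pi fun _ => gaussianReal 0 1)
          = ∫ q : ℝ × (Fin n → ℝ), f 0 q.1 * ∏ i : Fin n, f i.succ (q.2 i)
              ∂((gaussianReal 0 1).prod (Measure.pi fun _ => gaussianReal 0 1)) := by
            rw [← ((measurePreserving_piFinSuccAbove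
              (fun _ : Fin (n+1) => gaussianReal 0 1) 0).symm).integral_comp']
            simp_rw [MeasurableEquiv.piFinSuccAbove_symm_apply, Fin.insertNthEquiv,
              Fin.prod_univ_succ, Fin.insertNth_zero, Equiv.coe_fn_mk, Fin.cons_succ]
            try simp only [Fin.zero_succAbove, Fin.cons_zero]
            try rfl
        _ = (∫ t, f 0 t ∂(gaussianReal 0 1))
              * ∏ i : Fin n, ∫ t, f i.succ t ∂(gaussianReal 0 1) := by
            rw [← ih fun i => f i.succ, ← integral_prod_mul]
        _ = ∏ i, ∫ t, f i t ∂(gaussianReal 0 1) := by rw [Fin.prod_univ_succ]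

end PiPart

section Monomials

variable {n : ℕ}

lemma prod_gm_four {e : Fin n → ℕ} (a : Fin n) (ha : e a = 4)
    (h0 : ∀ c, c ≠ a → e c = 0) :
    (∏ c, ∫ t, t ^ (e c) ∂(gaussianReal 0 1)) = 3 := by
  rw [Finset.prod_eq_single a (fun c _ hc => by rw [h0 c hc]; simpa using gauss_moment_zero)
    (by simp), ha, gauss_moment_four]

lemma prod_gm_pair {e : Fin n → ℕ} (a b : Fin n) (hab : a ≠ b) (ha : e a = 2) (hb : e b = 2)
    (h0 : ∀ c, c ≠ a → c ≠ b → e c = 0) :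
    (∏ c, ∫ t, t ^ (e c) ∂(gaussianReal 0 1)) = 1 := by
  apply Finset.prod_eq_one
  intro c _
  rcases eq_or_ne c a with h | h
  · rw [h, ha, gauss_moment_two]
  rcases eq_or_ne c b with h2 | h2
  · rw [h2, hb, gauss_moment_two]
  · rw [h0 c h h2]; simpa using gauss_moment_zero

lemma prod_gm_zero {e : Fin n → ℕ} (a : Fin n) (ha : e a = 1 ∨ e a = 3) :
    (∏ c, ∫ t, t ^ (e c) ∂(gaussianReal 0 1)) = 0 := by
  apply Finset.prod_eq_zero (Finset.mem_univ a)
  rcases ha with h | h <;> rw [h]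
  · simpa using gauss_moment_odd 1 (by decide)
  · exact gauss_moment_odd 3 (by decide)

lemma single_eq (z : Fin n → ℝ) (a : Fin n) :
    ∏ c, z c ^ (if c = a then 1 else 0) = z a := by
  rw [Finset.prod_eq_single a (fun c _ hc => by simp [hc]) (by simp)]
  simp

lemma monomial4_eq (z : Fin n → ℝ) (i j k l : Fin n) :
    z i * z j * z k * z l = ∏ c, z c ^
      ((if c = i then 1 else 0) + (if c = j then 1 else 0)
        + (if c = k then 1 else 0) + (if c = l then 1 else 0)) := by
  simp_rw [pow_add, Finset.prod_mul_distrib, single_eq]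

lemma monomial2_eq (z : Fin n → ℝ) (i j : Fin n) :
    z i * z j = ∏ c, z c ^ ((if c = i then 1 else 0) + (if c = j then 1 else 0)) := by
  simp_rw [pow_add, Finset.prod_mul_distrib, single_eq]

lemma integrable_monomial4 (i j k l : Fin n) :
    Integrable (fun z : Fin n → ℝ => z i * z j * z k * z l)
      (Measure.pi fun _ => gaussianReal 0 1) := by
  rw [show (fun z : Fin n → ℝ => z i * z j * z k * z l)
      = fun z => ∏ c, z c ^ ((if c = i then 1 else 0) + (if c = j then 1 else 0)
        + (if c = k then 1 else 0) + (if c = l then 1 else 0))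
    from funext fun z => monomial4_eq z i j k l]
  exact integrable_pi_prod (fun c => integrable_pow_gauss _)

lemma integrable_monomial2 (i j : Fin n) :
    Integrable (fun z : Fin n → ℝ => z i * z j)
      (Measure.pi fun _ => gaussianReal 0 1) := by
  rw [show (fun z : Fin n → ℝ => z i * z j)
      = fun z => ∏ c, z c ^ ((if c = i then 1 else 0) + (if c = j then 1 else 0))
    from funext fun z => monomial2_eq z i j]
  exact integrable_pi_prod (fun c => integrable_pow_gauss _)

lemma integral_monomial2 (i j : Fin n) :
    ∫ z : Fin n → ℝ, z i * z j ∂(Measure.pi fun _ => gaussianReal 0 1)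
      = if i = j then 1 else 0 := by
  rw [show (fun z : Fin n → ℝ => z i * z j)
      = fun z => ∏ c, z c ^ ((if c = i then 1 else 0) + (if c = j then 1 else 0))
    from funext fun z => monomial2_eq z i j]
  refine Eq.trans (integral_pi_prod
    (fun c t => t ^ ((if c = i then 1 else 0) + (if c = j then 1 else 0)))) ?_
  by_cases hij : i = j
  · subst hij
    rw [if_pos rfl]
    apply Finset.prod_eq_one
    intro c _
    by_cases h : c = i
    · simp only [h, if_pos rfl]
      exact gauss_moment_two
    · simp only [h, if_neg h]
      simpa using gauss_moment_zero
  · rw [if_neg hij]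
    exact prod_gm_zero i (Or.inl (by simp [hij]))

lemma integral_monomial4 (i j k l : Fin n) :
    ∫ z : Fin n → ℝ, z i * z j * z k * z l ∂(Measure.pi fun _ => gaussianReal 0 1)
      = (if i = j then (1:ℝ) else 0) * (if k = l then 1 else 0)
        + (if i = k then 1 else 0) * (if j = l then 1 else 0)
        + (if i = l then 1 else 0) * (if j = k then 1 else 0) := by
  rw [show (fun z : Fin n → ℝ => z i * z j * z k * z l)
      = fun z => ∏ c, z c ^ ((if c = i then 1 else 0) + (if c = j then 1 else 0)
        + (if c = k then 1 else 0) + (if c = l then 1 else 0))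
    from funext fun z => monomial4_eq z i j k l]
  refine Eq.trans (integral_pi_prod
    (fun c t => t ^ ((if c = i then 1 else 0) + (if c = j then 1 else 0)
      + (if c = k then 1 else 0) + (if c = l then 1 else 0)))) ?_
  by_cases hij : i = j <;> by_cases hik : i = k <;> by_cases hil : i = l <;>
    by_cases hjk : j = k <;> by_cases hjl : j = l <;> by_cases hkl : k = l <;>
  first
    | (exfalso; simp_all; done)
    | ((refine (prod_gm_four i ?_ (fun c hc => ?_)).trans ?_ <;> simp_all [eq_comm] <;> norm_num); done)
    | ((refine (prod_gm_pair i k ?_ ?_ ?_ (fun c h1 h2 => ?_)).trans ?_ <;>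
        simp_all [eq_comm] <;> norm_num); done)
    | ((refine (prod_gm_pair i j ?_ ?_ ?_ (fun c h1 h2 => ?_)).trans ?_ <;>
        simp_all [eq_comm] <;> norm_num); done)
    | ((refine (prod_gm_zero i ?_).trans ?_ <;> simp_all [eq_comm] <;> norm_num); done)
    | ((refine (prod_gm_zero j ?_).trans ?_ <;> simp_all [eq_comm] <;> norm_num); done)
    | ((refine (prod_gm_zero k ?_).trans ?_ <;> simp_all [eq_comm] <;> norm_num); done)
    | ((refine (prod_gm_zero l ?_).trans ?_ <;> simp_all [eq_comm] <;> norm_num); done)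

end Monomials

section Sums

variable {n : ℕ}

lemma sq_sum_expand (a : Fin n → ℝ) (z : Fin n → ℝ) :
    (∑ i, z i * a i) ^ 2 = ∑ i, ∑ j, (a i * a j) * (z i * z j) := by
  rw [sq, Finset.sum_mul_sum]
  exact Finset.sum_congr rfl fun i _ => Finset.sum_congr rfl fun j _ => by ring

lemma quart_sum_expand (a b : Fin n → ℝ) (z : Fin n → ℝ) :
    (∑ i, z i * a i) ^ 2 * (∑ i, z i * b i) ^ 2
      = ∑ i, ∑ j, ∑ k, ∑ l, (a i * a j * (b k * b l)) * (z i * z j * z k * z l) := by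
  rw [sq_sum_expand a z, sq_sum_expand b z, Finset.sum_mul_sum]
  refine Finset.sum_congr rfl fun i _ => ?_
  calc ∑ k, (∑ j, (a i * a j) * (z i * z j)) * (∑ l, (b k * b l) * (z k * z l))
      = ∑ k, ∑ j, ∑ l, (a i * a j * (b k * b l)) * (z i * z j * (z k * z l)) := by
        refine Finset.sum_congr rfl fun k _ => ?_
        rw [Finset.sum_mul_sum]
        exact Finset.sum_congr rfl fun j _ => Finset.sum_congr rfl fun l _ => by ring
    _ = ∑ j, ∑ k, ∑ l, (a i * a j * (b k * b l)) * (z i * z j * (z k * z l)) :=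
        Finset.sum_comm
    _ = ∑ j, ∑ k, ∑ l, (a i * a j * (b k * b l)) * (z i * z j * z k * z l) := by
        refine Finset.sum_congr rfl fun j _ => Finset.sum_congr rfl fun k _ =>
          Finset.sum_congr rfl fun l _ => by ring

lemma integrable_sq_sum (a : Fin n → ℝ) :
    Integrable (fun z : Fin n → ℝ => (∑ i, z i * a i) ^ 2)
      (Measure.pi fun _ => gaussianReal 0 1) := by
  rw [show (fun z : Fin n → ℝ => (∑ i, z i * a i) ^ 2)
      = fun z => ∑ i, ∑ j, (a i * a j) * (z i * z j) from funext fun z => sq_sum_expand a z]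
  exact integrable_finset_sum _ (fun i _ => integrable_finset_sum _
    (fun j _ => (integrable_monomial2 i j).const_mul _))

lemma integrable_quart_sum (a b : Fin n → ℝ) :
    Integrable (fun z : Fin n → ℝ => (∑ i, z i * a i) ^ 2 * (∑ i, z i * b i) ^ 2)
      (Measure.pi fun _ => gaussianReal 0 1) := by
  rw [show (fun z : Fin n → ℝ => (∑ i, z i * a i) ^ 2 * (∑ i, z i * b i) ^ 2)
      = fun z => ∑ i, ∑ j, ∑ k, ∑ l, (a i * a j * (b k * b l)) * (z i * z j * z k * z l)
    from funext fun z => quart_sum_expand a b z]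
  exact integrable_finset_sum _ (fun i _ => integrable_finset_sum _
    (fun j _ => integrable_finset_sum _ (fun k _ => integrable_finset_sum _
      (fun l _ => (integrable_monomial4 i j k l).const_mul _))))

lemma integral_sq_sum (a : Fin n → ℝ) :
    ∫ z : Fin n → ℝ, (∑ i, z i * a i) ^ 2 ∂(Measure.pi fun _ => gaussianReal 0 1)
      = ∑ i, a i * a i := by
  rw [show (fun z : Fin n → ℝ => (∑ i, z i * a i) ^ 2)
      = fun z => ∑ i, ∑ j, (a i * a j) * (z i * z j) from funext fun z => sq_sum_expand a z]
  rw [integral_finset_sum _ (fun i _ => integrable_finset_sum _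
    (fun j _ => (integrable_monomial2 i j).const_mul _))]
  have h : ∀ i : Fin n, ∫ z : Fin n → ℝ, ∑ j, (a i * a j) * (z i * z j)
        ∂(Measure.pi fun _ => gaussianReal 0 1)
      = ∑ j, (a i * a j) * (if i = j then 1 else 0) := by
    intro i
    rw [integral_finset_sum _ (fun j _ => (integrable_monomial2 i j).const_mul _)]
    exact Finset.sum_congr rfl fun j _ => by
      rw [integral_const_mul, integral_monomial2]
  rw [Finset.sum_congr rfl fun i _ => h i]
  simp [mul_ite, Finset.sum_ite_eq, mul_one, mul_zero]

lemma sum_if_indep {c : Prop} [Decidable c] (f : Fin n → ℝ) :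
    (∑ x : Fin n, if c then f x else 0) = if c then ∑ x, f x else 0 := by
  split_ifs <;> simp

lemma integral_quart_sum (a b : Fin n → ℝ) :
    ∫ z : Fin n → ℝ, (∑ i, z i * a i) ^ 2 * (∑ i, z i * b i) ^ 2
        ∂(Measure.pi fun _ => gaussianReal 0 1)
      = (∑ i, a i * a i) * (∑ i, b i * b i) + 2 * (∑ i, a i * b i) ^ 2 := by
  rw [show (fun z : Fin n → ℝ => (∑ i, z i * a i) ^ 2 * (∑ i, z i * b i) ^ 2)
      = fun z => ∑ i, ∑ j, ∑ k, ∑ l, (a i * a j * (b k * b l)) * (z i * z j * z k * z l)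
    from funext fun z => quart_sum_expand a b z]
  rw [integral_finset_sum _ (fun i _ => integrable_finset_sum _
    (fun j _ => integrable_finset_sum _ (fun k _ => integrable_finset_sum _
      (fun l _ => (integrable_monomial4 i j k l).const_mul _))))]
  have h : ∀ i : Fin n, ∫ z : Fin n → ℝ, ∑ j, ∑ k, ∑ l,
        (a i * a j * (b k * b l)) * (z i * z j * z k * z l)
        ∂(Measure.pi fun _ => gaussianReal 0 1)
      = ∑ j, ∑ k, ∑ l, (a i * a j * (b k * b l)) *
          ((if i = j then (1:ℝ) else 0) * (if k = l then 1 else 0)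
            + (if i = k then 1 else 0) * (if j = l then 1 else 0)
            + (if i = l then 1 else 0) * (if j = k then 1 else 0)) := by
    intro i
    rw [integral_finset_sum _ (fun j _ => integrable_finset_sum _
      (fun k _ => integrable_finset_sum _
        (fun l _ => (integrable_monomial4 i j k l).const_mul _)))]
    refine Finset.sum_congr rfl fun j _ => ?_
    rw [integral_finset_sum _ (fun k _ => integrable_finset_sum _
      (fun l _ => (integrable_monomial4 i j k l).const_mul _))]
    refine Finset.sum_congr rfl fun k _ => ?_
    rw [integral_finset_sum _ (fun l _ => (integrable_monomial4 i j k l).const_mul _)]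
    refine Finset.sum_congr rfl fun l _ => ?_
    rw [integral_const_mul, integral_monomial4]
  rw [Finset.sum_congr rfl fun i _ => h i]
  have expand1 : (∑ i, a i * a i) * (∑ i, b i * b i)
      = ∑ i, ∑ k, (a i * a i) * (b k * b k) := Finset.sum_mul_sum _ _ _ _
  have expand2 : (∑ i, a i * b i) ^ 2 = ∑ i, ∑ j, (a i * b i) * (a j * b j) := by
    rw [sq, Finset.sum_mul_sum]
  rw [expand1, expand2]
  simp only [mul_add, Finset.sum_add_distrib, mul_ite, ite_mul, mul_one, mul_zero,
    one_mul, zero_mul, sum_if_indep, Finset.sum_const_zero, Finset.sum_ite_eq,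
    Finset.mem_univ, if_true, Finset.mul_sum]
  ring_nf
  have e1 : ∀ x y : Fin n, a x * a x * b y * b y = a x ^ 2 * b y ^ 2 := fun x y => by ring
  have e2 : ∀ x y : Fin n, a x * b x * a y * b y * 2
      = a x * a y * b x * b y + a x * a y * b y * b x := fun x y => by ring
  simp_rw [e2, Finset.sum_add_distrib]
  ring

end Sums

section MainInt

variable {n : ℕ}

lemma main_integral (ν : Measure ℝ) [IsProbabilityMeasure ν]
    (hν1 : Integrable (fun t => t) ν) (hν2 : Integrable (fun t => t ^ 2) ν)
    (hcentered : ∫ t, t ∂ν = 0) (xstar y : Fin n → ℝ) :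
    ∫ p : (Fin n → ℝ) × ℝ,
        ((∑ i, p.1 i * y i) ^ 2 - (∑ i, p.1 i * xstar i) ^ 2 - p.2) ^ 2
        ∂((Measure.pi fun _ : Fin n => gaussianReal 0 1).prod ν)
      = 3 * (∑ i, y i * y i) ^ 2 - 2 * (∑ i, y i * y i) * (∑ i, xstar i * xstar i)
        - 4 * (∑ i, y i * xstar i) ^ 2
        + (3 * (∑ i, xstar i * xstar i) ^ 2 + ∫ t, t ^ 2 ∂ν) := by
  have hexp : ∀ p : (Fin n → ℝ) × ℝ,
      ((∑ i, p.1 i * y i) ^ 2 - (∑ i, p.1 i * xstar i) ^ 2 - p.2) ^ 2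
      = ((∑ i, p.1 i * y i) ^ 2 * (∑ i, p.1 i * y i) ^ 2) * (1:ℝ)
        - 2 * (((∑ i, p.1 i * y i) ^ 2 * (∑ i, p.1 i * xstar i) ^ 2) * (1:ℝ))
        + ((∑ i, p.1 i * xstar i) ^ 2 * (∑ i, p.1 i * xstar i) ^ 2) * (1:ℝ)
        - 2 * ((∑ i, p.1 i * y i) ^ 2 * p.2)
        + 2 * ((∑ i, p.1 i * xstar i) ^ 2 * p.2)
        + (1:ℝ) * p.2 ^ 2 := fun p => by ring
  rw [integral_congr_ae (Filter.Eventually.of_forall hexp)]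
  have h1 : Integrable (fun p : (Fin n → ℝ) × ℝ =>
      ((∑ i, p.1 i * y i) ^ 2 * (∑ i, p.1 i * y i) ^ 2) * (1:ℝ))
      ((Measure.pi fun _ : Fin n => gaussianReal 0 1).prod ν) :=
    (integrable_quart_sum y y).mul_prod (integrable_const 1)
  have h2 : Integrable (fun p : (Fin n → ℝ) × ℝ =>
      2 * (((∑ i, p.1 i * y i) ^ 2 * (∑ i, p.1 i * xstar i) ^ 2) * (1:ℝ)))
      ((Measure.pi fun _ : Fin n => gaussianReal 0 1).prod ν) :=
    ((integrable_quart_sum y xstar).mul_prod (integrable_const 1)).const_mul 2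
  have h3 : Integrable (fun p : (Fin n → ℝ) × ℝ =>
      ((∑ i, p.1 i * xstar i) ^ 2 * (∑ i, p.1 i * xstar i) ^ 2) * (1:ℝ))
      ((Measure.pi fun _ : Fin n => gaussianReal 0 1).prod ν) :=
    (integrable_quart_sum xstar xstar).mul_prod (integrable_const 1)
  have h4 : Integrable (fun p : (Fin n → ℝ) × ℝ =>
      2 * ((∑ i, p.1 i * y i) ^ 2 * p.2))
      ((Measure.pi fun _ : Fin n => gaussianReal 0 1).prod ν) :=
    ((integrable_sq_sum y).mul_prod hν1).const_mul 2
  have h5 : Integrable (fun p : (Fin n → ℝ) × ℝ =>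
      2 * ((∑ i, p.1 i * xstar i) ^ 2 * p.2))
      ((Measure.pi fun _ : Fin n => gaussianReal 0 1).prod ν) :=
    ((integrable_sq_sum xstar).mul_prod hν1).const_mul 2
  have h6 : Integrable (fun p : (Fin n → ℝ) × ℝ => (1:ℝ) * p.2 ^ 2)
      ((Measure.pi fun _ : Fin n => gaussianReal 0 1).prod ν) :=
    (integrable_const 1).mul_prod hν2
  have h12 : Integrable (fun p : (Fin n → ℝ) × ℝ =>
      ((∑ i, p.1 i * y i) ^ 2 * (∑ i, p.1 i * y i) ^ 2) * (1:ℝ)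
        - 2 * (((∑ i, p.1 i * y i) ^ 2 * (∑ i, p.1 i * xstar i) ^ 2) * (1:ℝ)))
      ((Measure.pi fun _ : Fin n => gaussianReal 0 1).prod ν) := h1.sub h2
  have h123 : Integrable (fun p : (Fin n → ℝ) × ℝ =>
      ((∑ i, p.1 i * y i) ^ 2 * (∑ i, p.1 i * y i) ^ 2) * (1:ℝ)
        - 2 * (((∑ i, p.1 i * y i) ^ 2 * (∑ i, p.1 i * xstar i) ^ 2) * (1:ℝ))
        + ((∑ i, p.1 i * xstar i) ^ 2 * (∑ i, p.1 i * xstar i) ^ 2) * (1:ℝ))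
      ((Measure.pi fun _ : Fin n => gaussianReal 0 1).prod ν) := h12.add h3
  have h1234 : Integrable (fun p : (Fin n → ℝ) × ℝ =>
      ((∑ i, p.1 i * y i) ^ 2 * (∑ i, p.1 i * y i) ^ 2) * (1:ℝ)
        - 2 * (((∑ i, p.1 i * y i) ^ 2 * (∑ i, p.1 i * xstar i) ^ 2) * (1:ℝ))
        + ((∑ i, p.1 i * xstar i) ^ 2 * (∑ i, p.1 i * xstar i) ^ 2) * (1:ℝ)
        - 2 * ((∑ i, p.1 i * y i) ^ 2 * p.2))
      ((Measure.pi fun _ : Fin n => gaussianReal 0 1).prod ν) := h123.sub h4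
  have h12345 : Integrable (fun p : (Fin n → ℝ) × ℝ =>
      ((∑ i, p.1 i * y i) ^ 2 * (∑ i, p.1 i * y i) ^ 2) * (1:ℝ)
        - 2 * (((∑ i, p.1 i * y i) ^ 2 * (∑ i, p.1 i * xstar i) ^ 2) * (1:ℝ))
        + ((∑ i, p.1 i * xstar i) ^ 2 * (∑ i, p.1 i * xstar i) ^ 2) * (1:ℝ)
        - 2 * ((∑ i, p.1 i * y i) ^ 2 * p.2)
        + 2 * ((∑ i, p.1 i * xstar i) ^ 2 * p.2))
      ((Measure.pi fun _ : Fin n => gaussianReal 0 1).prod ν) := h1234.add h5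
  rw [integral_add h12345 h6, integral_add h1234 h5, integral_sub h123 h4,
    integral_add h12 h3, integral_sub h1 h2,
    integral_const_mul, integral_const_mul, integral_const_mul]
  have e1 : ∫ p : (Fin n → ℝ) × ℝ,
        ((∑ i, p.1 i * y i) ^ 2 * (∑ i, p.1 i * y i) ^ 2) * (1:ℝ)
        ∂((Measure.pi fun _ : Fin n => gaussianReal 0 1).prod ν)
      = (∫ z : Fin n → ℝ, (∑ i, z i * y i) ^ 2 * (∑ i, z i * y i) ^ 2
          ∂(Measure.pi fun _ : Fin n => gaussianReal 0 1)) * ∫ t, (1:ℝ) ∂ν :=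
    integral_prod_mul (fun z : Fin n → ℝ => (∑ i, z i * y i) ^ 2 * (∑ i, z i * y i) ^ 2)
      (fun _ => (1:ℝ))
  have e2 : ∫ p : (Fin n → ℝ) × ℝ,
        ((∑ i, p.1 i * y i) ^ 2 * (∑ i, p.1 i * xstar i) ^ 2) * (1:ℝ)
        ∂((Measure.pi fun _ : Fin n => gaussianReal 0 1).prod ν)
      = (∫ z : Fin n → ℝ, (∑ i, z i * y i) ^ 2 * (∑ i, z i * xstar i) ^ 2
          ∂(Measure.pi fun _ : Fin n => gaussianReal 0 1)) * ∫ t, (1:ℝ) ∂ν :=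
    integral_prod_mul (fun z : Fin n → ℝ => (∑ i, z i * y i) ^ 2 * (∑ i, z i * xstar i) ^ 2)
      (fun _ => (1:ℝ))
  have e3 : ∫ p : (Fin n → ℝ) × ℝ,
        ((∑ i, p.1 i * xstar i) ^ 2 * (∑ i, p.1 i * xstar i) ^ 2) * (1:ℝ)
        ∂((Measure.pi fun _ : Fin n => gaussianReal 0 1).prod ν)
      = (∫ z : Fin n → ℝ, (∑ i, z i * xstar i) ^ 2 * (∑ i, z i * xstar i) ^ 2
          ∂(Measure.pi fun _ : Fin n => gaussianReal 0 1)) * ∫ t, (1:ℝ) ∂ν :=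
    integral_prod_mul
      (fun z : Fin n → ℝ => (∑ i, z i * xstar i) ^ 2 * (∑ i, z i * xstar i) ^ 2)
      (fun _ => (1:ℝ))
  have e4 : ∫ p : (Fin n → ℝ) × ℝ, (∑ i, p.1 i * y i) ^ 2 * p.2
        ∂((Measure.pi fun _ : Fin n => gaussianReal 0 1).prod ν)
      = (∫ z : Fin n → ℝ, (∑ i, z i * y i) ^ 2
          ∂(Measure.pi fun _ : Fin n => gaussianReal 0 1)) * ∫ t, t ∂ν :=
    integral_prod_mul (fun z : Fin n → ℝ => (∑ i, z i * y i) ^ 2) (fun t => t)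
  have e5 : ∫ p : (Fin n → ℝ) × ℝ, (∑ i, p.1 i * xstar i) ^ 2 * p.2
        ∂((Measure.pi fun _ : Fin n => gaussianReal 0 1).prod ν)
      = (∫ z : Fin n → ℝ, (∑ i, z i * xstar i) ^ 2
          ∂(Measure.pi fun _ : Fin n => gaussianReal 0 1)) * ∫ t, t ∂ν :=
    integral_prod_mul (fun z : Fin n → ℝ => (∑ i, z i * xstar i) ^ 2) (fun t => t)
  have e6 : ∫ p : (Fin n → ℝ) × ℝ, (1:ℝ) * p.2 ^ 2
        ∂((Measure.pi fun _ : Fin n => gaussianReal 0 1).prod ν)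
      = (∫ _ : Fin n → ℝ, (1:ℝ)
          ∂(Measure.pi fun _ : Fin n => gaussianReal 0 1)) * ∫ t, t ^ 2 ∂ν :=
    integral_prod_mul (fun _ : Fin n → ℝ => (1:ℝ)) (fun t => t ^ 2)
  rw [e1, e2, e3, e4, e5, e6, hcentered, integral_quart_sum, integral_quart_sum,
    integral_quart_sum, integral_sq_sum, integral_sq_sum]
  have hone : ∫ t, (1:ℝ) ∂ν = 1 := by simp
  have hone2 : ∫ _ : Fin n → ℝ, (1:ℝ) ∂(Measure.pi fun _ : Fin n => gaussianReal 0 1) = 1 := by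
    simp
  rw [hone, hone2]
  ring

end MainInt


end PhaseAux


/-- The population gradient of the phase retrieval empirical risk:
`∇f(x) = (3‖x‖² - ‖x*‖²)·x - 2(xᵀx*)·x*` for
`f(x) = E[((Aᵀx)² - (Aᵀx*)² - ε)²]/4` with `A ~ N(0, Iₙ)` and `ε` centered,
independent of `A`. -/
theorem stmt4 (n : ℕ) (ν : Measure ℝ) [IsProbabilityMeasure ν]
    (hν1 : Integrable (fun t => t) ν) (hν2 : Integrable (fun t => t^2) ν)
    (hcentered : ∫ t, t ∂ν = 0)
    (x xstar : EuclideanSpace ℝ (Fin n)) :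
    HasGradientAt
      (fun y : EuclideanSpace ℝ (Fin n) =>
        (1/4) * ∫ p : (Fin n → ℝ) × ℝ,
          ((∑ i, p.1 i * y i)^2 - (∑ i, p.1 i * xstar i)^2 - p.2)^2
          ∂((Measure.pi fun _ : Fin n => gaussianReal 0 1).prod ν))
      ((3 * ∑ i, (x i)^2 - ∑ i, (xstar i)^2) • x - (2 * ∑ i, x i * xstar i) • xstar)
      x := by
  classical
  have key : (fun y : EuclideanSpace ℝ (Fin n) =>
      (1/4) * ∫ p : (Fin n → ℝ) × ℝ,
        ((∑ i, p.1 i * y i)^2 - (∑ i, p.1 i * xstar i)^2 - p.2)^2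
        ∂((Measure.pi fun _ : Fin n => gaussianReal 0 1).prod ν))
      = fun y : EuclideanSpace ℝ (Fin n) =>
        (1/4) * (3 * ((inner ℝ y y : ℝ) * (inner ℝ y y : ℝ))
          - 2 * ((inner ℝ y y : ℝ) * (∑ i, xstar i * xstar i))
          - 4 * ((inner ℝ y xstar : ℝ) * (inner ℝ y xstar : ℝ))
          + (3 * (∑ i, xstar i * xstar i)^2 + ∫ t, t^2 ∂ν)) := by
    funext y
    rw [PhaseAux.main_integral ν hν1 hν2 hcentered xstar y]
    simp only [PiLp.inner_apply, RCLike.inner_apply, conj_trivial]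
    simp only [mul_comm (xstar _) (y _)]
    ring
  rw [key]
  have hid := hasFDerivAt_id (𝕜 := ℝ) x
  have hQ := HasFDerivAt.inner ℝ hid hid
  have hP := HasFDerivAt.inner ℝ hid (hasFDerivAt_const xstar x)
  have hbig := ((((hQ.mul hQ).const_mul (3:ℝ)).sub
      ((hQ.mul_const (∑ i, xstar i * xstar i)).const_mul (2:ℝ))).sub
      ((hP.mul hP).const_mul (4:ℝ))).add_const
      (3 * (∑ i, xstar i * xstar i)^2 + ∫ t, t^2 ∂ν)
  have hbig2 := hbig.const_mul (1/4 : ℝ)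
  refine hasGradientAt_iff_hasFDerivAt.mpr (HasFDerivAt.congr_fderiv hbig2 ?_)
  apply ContinuousLinearMap.ext
  intro v
  simp only [InnerProductSpace.toDual_apply_apply, ContinuousLinearMap.smul_apply,
    ContinuousLinearMap.sub_apply, ContinuousLinearMap.add_apply,
    ContinuousLinearMap.comp_apply, ContinuousLinearMap.prod_apply,
    ContinuousLinearMap.coe_id', id_eq, ContinuousLinearMap.zero_apply,
    fderivInnerCLM_apply, smul_eq_mul, inner_sub_left, inner_smul_left, conj_trivial,
    ContinuousLinearMap.id_apply, inner_zero_right, inner_zero_left, add_zero, zero_add]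
  rw [real_inner_comm v x, real_inner_comm v xstar]
  simp only [PiLp.inner_apply, RCLike.inner_apply, conj_trivial, pow_two]
  simp only [mul_comm (xstar _) (x _)]
  ring
end
end

section
/- Let x*, x ∈ ℝⁿ with ‖x*‖₂ = 1, and let ∇f(x) = (3‖x‖₂² - 1)x - 2(xᵀx*)x*. If ‖x‖₂² > 2/5 and 2 - 4‖x‖₂² + ‖x - x*‖₂² < 0, then ⟨∇f(x), x - x*⟩ ≥ sqrt(2/5)·‖x - x*‖₂². -/
private lemma aux_sum (n : ℕ) (x xstar : Fin n → ℝ) (c1 c2 : ℝ) :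
    ∑ i, (c1 * x i - c2 * xstar i) * (x i - xstar i)
      = c1 * (∑ i, (x i)^2) - c1 * (∑ i, x i * xstar i)
        - c2 * (∑ i, x i * xstar i) + c2 * (∑ i, (xstar i)^2) := by
  rw [Finset.mul_sum, Finset.mul_sum, Finset.mul_sum, Finset.mul_sum,
    ← Finset.sum_sub_distrib, ← Finset.sum_sub_distrib, ← Finset.sum_add_distrib]
  exact Finset.sum_congr rfl fun i _ => by ring

private lemma aux_sub (n : ℕ) (x xstar : Fin n → ℝ) :
    ∑ i, (x i - xstar i)^2
      = (∑ i, (x i)^2) - 2 * (∑ i, x i * xstar i) + (∑ i, (xstar i)^2) := by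
  rw [Finset.mul_sum, ← Finset.sum_sub_distrib, ← Finset.sum_add_distrib]
  exact Finset.sum_congr rfl fun i _ => by ring

/-- Variational coherence lower bound for the population gradient of phase retrieval in
the regime `‖x‖² > 2/5`, `2 - 4‖x‖² + ‖x - x*‖² < 0`. -/
theorem stmt5 (n : ℕ) (x xstar : Fin n → ℝ)
    (hstar : ∑ i, (xstar i)^2 = 1)
    (h1 : 2/5 < ∑ i, (x i)^2)
    (h2 : 2 - 4 * ∑ i, (x i)^2 + ∑ i, (x i - xstar i)^2 < 0) :
    Real.sqrt (2/5) * ∑ i, (x i - xstar i)^2 ≤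
      ∑ i, ((3 * (∑ j, (x j)^2) - 1) * x i - 2 * (∑ j, x j * xstar j) * xstar i)
        * (x i - xstar i) := by
  have hkey := aux_sum n x xstar (3 * (∑ j, (x j)^2) - 1) (2 * (∑ j, x j * xstar j))
  have hexp0 := aux_sub n x xstar
  set s : ℝ := ∑ i, (x i)^2 with hs
  set a : ℝ := ∑ i, x i * xstar i with ha
  set D : ℝ := ∑ i, (x i - xstar i)^2 with hD
  rw [hstar] at hkey hexp0
  have hsnonneg : 0 ≤ s := Finset.sum_nonneg fun i _ => sq_nonneg _
  have hDnonneg : 0 ≤ D := Finset.sum_nonneg fun i _ => sq_nonneg _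
  rw [hkey]
  have hcs : a^2 ≤ s * 1 := by
    rw [ha, hs, ← hstar]
    exact Finset.sum_mul_sq_le_sq_mul_sq Finset.univ x xstar
  set t : ℝ := Real.sqrt s with ht
  have htnn : 0 ≤ t := Real.sqrt_nonneg s
  have ht2 : t^2 = s := Real.sq_sqrt hsnonneg
  have hat : a ≤ t := by nlinarith [sq_nonneg (a - t), sq_nonneg (a + t)]
  set r : ℝ := Real.sqrt (2/5) with hr
  have hr2 : r^2 = 2/5 := Real.sq_sqrt (by norm_num)
  have hrt : r ≤ t := Real.sqrt_le_sqrt (le_of_lt h1)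
  have hrpos : 0 < r := Real.sqrt_pos.mpr (by norm_num)
  have p1 : 0 ≤ t * (t - 1)^2 * (3 * t + 2) :=
    mul_nonneg (mul_nonneg htnn (sq_nonneg _)) (by linarith)
  have p2 : 0 ≤ (4 * s - 2 - D) * (t - a) :=
    mul_nonneg (by linarith) (by linarith)
  have p3 : 0 ≤ D * (t - r) := mul_nonneg hDnonneg (by linarith)
  nlinarith [p1, p2, p3, ht2, hexp0]
end

section
/- The hyperbolic entropy mirror map Φ(x) = Σ_{i=1}^n (x_i arcsinh(x_i/β) - sqrt(x_i² + β²)) with 0 < β ≤ √2 is (1/2)-strongly convex with respect to the Euclidean norm on the ball {x ∈ ℝⁿ : ‖x‖₂² ≤ 2}; in particular its Hessian is diagonal with entries ∇²Φ(x)_{ii} = 1/sqrt(x_i² + β²) ≥ 1/2 on that ball. -/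
open Real

variable {β : ℝ}

-- basic: sqrt(y^2+β^2) and relation to β*sqrt(1+(y/β)^2)
lemma sqrt_aux (hβ0 : 0 < β) (y : ℝ) :
    β * Real.sqrt (1 + (y/β)^2) = Real.sqrt (y^2 + β^2) := by
  rw [← Real.sqrt_sq hβ0.le, ← Real.sqrt_mul (by positivity)]
  congr 1
  field_simp
  rw [Real.sqrt_sq hβ0.le]
  ring

lemma sqrt_pos_aux (hβ0 : 0 < β) (y : ℝ) : 0 < Real.sqrt (y^2 + β^2) :=
  Real.sqrt_pos.mpr (by positivity)

lemma hasDerivAt_f (hβ0 : 0 < β) (y : ℝ) :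
    HasDerivAt (fun y => y * Real.arsinh (y / β) - Real.sqrt (y^2 + β^2))
      (Real.arsinh (y / β)) y := by
  have h1 : HasDerivAt (fun y : ℝ => Real.arsinh (y / β))
      ((Real.sqrt (1 + (y/β)^2))⁻¹ * (1/β)) y :=
    (Real.hasDerivAt_arsinh (y/β)).comp (h := fun y : ℝ => y / β) y ((hasDerivAt_id y).div_const β)
  have h2 : HasDerivAt (fun y : ℝ => y * Real.arsinh (y / β))
      (1 * Real.arsinh (y/β) + y * ((Real.sqrt (1 + (y/β)^2))⁻¹ * (1/β))) y :=
    (hasDerivAt_id y).mul h1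
  have h3 : HasDerivAt (fun y : ℝ => Real.sqrt (y^2 + β^2))
      ((2*y + 0) / (2 * Real.sqrt (y^2 + β^2))) y := by
    have := ((hasDerivAt_pow 2 y).add_const (β^2)).sqrt (by positivity)
    simpa using this
  convert h2.sub h3 using 1
  any_goals rfl
  have hs := (sqrt_pos_aux hβ0 y).ne'
  have key : (Real.sqrt (1 + (y/β)^2))⁻¹ * (1/β) = (Real.sqrt (y^2 + β^2))⁻¹ := by
    rw [← sqrt_aux hβ0 y]
    rw [mul_inv]
    ring
  rw [key]
  field_simp
  ring

lemma hasDerivAt_f' (hβ0 : 0 < β) (y : ℝ) :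
    HasDerivAt (fun y : ℝ => Real.arsinh (y / β))
      (1 / Real.sqrt (y^2 + β^2)) y := by
  have h1 : HasDerivAt (fun y : ℝ => Real.arsinh (y / β))
      ((Real.sqrt (1 + (y/β)^2))⁻¹ * (1/β)) y :=
    (Real.hasDerivAt_arsinh (y/β)).comp (h := fun y : ℝ => y / β) y ((hasDerivAt_id y).div_const β)
  convert h1 using 1
  rw [← sqrt_aux hβ0 y, one_div, mul_inv]
  ring

lemma deriv_f (hβ0 : 0 < β) :
    deriv (fun y => y * Real.arsinh (y / β) - Real.sqrt (y^2 + β^2))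
      = fun y => Real.arsinh (y / β) := by
  funext y; exact (hasDerivAt_f hβ0 y).deriv

lemma deriv2_f (hβ0 : 0 < β) (y : ℝ) :
    deriv (deriv (fun y => y * Real.arsinh (y / β) - Real.sqrt (y^2 + β^2))) y
      = 1 / Real.sqrt (y^2 + β^2) := by
  rw [deriv_f hβ0]; exact (hasDerivAt_f' hβ0 y).deriv

-- pointwise bound
lemma hess_ge (hβ0 : 0 < β) (hβ2 : β ≤ Real.sqrt 2) {y : ℝ} (hy : y^2 ≤ 2) :
    (1:ℝ)/2 ≤ 1 / Real.sqrt (y^2 + β^2) := by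
  have hb2 : β^2 ≤ 2 := by
    have := Real.sq_sqrt (by norm_num : (2:ℝ) ≥ 0)
    nlinarith [Real.sqrt_nonneg 2]
  have h4 : y^2 + β^2 ≤ 4 := by linarith
  have hs : Real.sqrt (y^2 + β^2) ≤ 2 := by
    rw [show (2:ℝ) = Real.sqrt 4 by rw [show (4:ℝ) = 2^2 by norm_num, Real.sqrt_sq]; norm_num]
    exact Real.sqrt_le_sqrt h4
  have := sqrt_pos_aux hβ0 y
  rw [div_le_div_iff₀ (by norm_num) this]
  linarith

-- convexity of sums
lemma convexOn_finset_sum {E : Type*} [AddCommGroup E] [Module ℝ E] {ι : Type*}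
    (t : Finset ι) {s : Set E} (hs : Convex ℝ s) {F : ι → E → ℝ}
    (h : ∀ i ∈ t, ConvexOn ℝ s (F i)) :
    ConvexOn ℝ s (fun x => ∑ i ∈ t, F i x) := by
  classical
  induction t using Finset.induction_on with
  | empty => simpa using convexOn_const 0 hs
  | insert _ _ hni ih =>
    rename_i a t'
    simp only [Finset.sum_insert hni]
    exact (h a (Finset.mem_insert_self a t')).add
      (ih fun i hi => h i (Finset.mem_insert_of_mem hi))

lemma norm_sq_eq (n : ℕ) (x : EuclideanSpace ℝ (Fin n)) : ‖x‖^2 = ∑ i, (x i)^2 := by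
  rw [EuclideanSpace.norm_eq, Real.sq_sqrt (by positivity)]
  simp [sq_abs]

lemma coord_sq_le {n : ℕ} {x : EuclideanSpace ℝ (Fin n)} (hx : ‖x‖^2 ≤ 2) (i : Fin n) :
    (x i)^2 ≤ 2 := by
  rw [norm_sq_eq] at hx
  refine le_trans ?_ hx
  exact Finset.single_le_sum (fun j _ => sq_nonneg (x j)) (Finset.mem_univ i)

/-- The hyperbolic entropy mirror map with `0 < β ≤ √2` is `(1/2)`-strongly convex
w.r.t. the Euclidean norm on `{x : ‖x‖² ≤ 2}`; its Hessian is diagonal with entries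
`1/√(xᵢ² + β²) ≥ 1/2` there. -/
theorem stmt10 (n : ℕ) (β : ℝ) (hβ0 : 0 < β) (hβ2 : β ≤ Real.sqrt 2) :
    StrongConvexOn {x : EuclideanSpace ℝ (Fin n) | ‖x‖^2 ≤ 2} (1/2)
      (fun x => ∑ i, (x i * Real.arsinh (x i / β) - Real.sqrt ((x i)^2 + β^2)))
    ∧ ∀ x : EuclideanSpace ℝ (Fin n), ‖x‖^2 ≤ 2 →
        (∀ v : Fin n → ℝ, (1/2) * ∑ i, (v i)^2 ≤ ∑ i, (v i)^2 / Real.sqrt ((x i)^2 + β^2)) ∧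
        ∀ i, deriv (deriv (fun y => y * Real.arsinh (y / β) - Real.sqrt (y^2 + β^2))) (x i)
              = 1 / Real.sqrt ((x i)^2 + β^2)
            ∧ (1:ℝ)/2 ≤ 1 / Real.sqrt ((x i)^2 + β^2) := by
  set S : Set (EuclideanSpace ℝ (Fin n)) := {x | ‖x‖^2 ≤ 2} with hS
  have hSconv : Convex ℝ S := by
    have : S = Metric.closedBall (0 : EuclideanSpace ℝ (Fin n)) (Real.sqrt 2) := by
      ext x
      simp only [hS, Set.mem_setOf_eq, Metric.mem_closedBall, dist_zero_right]
      constructor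
      · intro h
        calc ‖x‖ = Real.sqrt (‖x‖^2) := by rw [Real.sqrt_sq (norm_nonneg x)]
        _ ≤ Real.sqrt 2 := Real.sqrt_le_sqrt h
      · intro h
        nlinarith [Real.sq_sqrt (by norm_num : (0:ℝ) ≤ 2), norm_nonneg x, Real.sqrt_nonneg 2]
    rw [this]; exact convex_closedBall _ _
  constructor
  · -- strong convexity
    rw [strongConvexOn_iff_convex]
    set g : ℝ → ℝ := fun y => y * Real.arsinh (y / β) - Real.sqrt (y^2 + β^2) - (1/4) * y^2
      with hg
    have hgconv : ConvexOn ℝ (Set.Icc (-Real.sqrt 2) (Real.sqrt 2)) g := by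
      apply convexOn_of_hasDerivWithinAt2_nonneg (f' := fun y => Real.arsinh (y/β) - y/2)
        (f'' := fun y => 1 / Real.sqrt (y^2 + β^2) - 1/2) (convex_Icc _ _)
      · apply ContinuousOn.sub
        · exact fun y _ => ((hasDerivAt_f hβ0 y).continuousAt).continuousWithinAt
        · exact (continuous_const.mul (continuous_pow 2)).continuousOn
      · intro y _
        exact ((hasDerivAt_f hβ0 y).sub (((hasDerivAt_pow 2 y).const_mul (1/4 : ℝ)).congr_deriv
          (by push_cast; ring))).hasDerivWithinAt
      · intro y _
        exact ((hasDerivAt_f' hβ0 y).sub ((hasDerivAt_id y).div_const 2)).hasDerivWithinAt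
      · intro y hy
        rw [interior_Icc] at hy
        have hy2 : y^2 ≤ 2 := by
          obtain ⟨h1, h2⟩ := hy
          nlinarith [Real.sq_sqrt (by norm_num : (0:ℝ) ≤ 2)]
        have := hess_ge hβ0 hβ2 hy2
        linarith
    have hsub : ∀ i : Fin n, S ⊆ (fun x : EuclideanSpace ℝ (Fin n) => x i) ⁻¹'
        Set.Icc (-Real.sqrt 2) (Real.sqrt 2) := by
      intro i x hx
      have h2 := coord_sq_le hx i
      have : |x i| ≤ Real.sqrt 2 := by
        rw [← Real.sqrt_sq_eq_abs]; exact Real.sqrt_le_sqrt h2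
      exact abs_le.mp this
    have hFi : ∀ i : Fin n, ConvexOn ℝ S (fun x : EuclideanSpace ℝ (Fin n) => g (x i)) := by
      intro i
      have := hgconv.comp_affineMap ((EuclideanSpace.proj i :
        EuclideanSpace ℝ (Fin n) →L[ℝ] ℝ).toLinearMap.toAffineMap)
      exact (this.subset (hsub i) hSconv)
    have hsum : ConvexOn ℝ S (fun x : EuclideanSpace ℝ (Fin n) => ∑ i, g (x i)) :=
      convexOn_finset_sum Finset.univ hSconv (fun i _ => hFi i)
    convert hsum using 2 with x
    · rfl
    rw [hg]
    simp only
    rw [norm_sq_eq, Finset.sum_sub_distrib, Finset.mul_sum,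
      ← Finset.sum_sub_distrib, ← Finset.sum_sub_distrib]
    exact Finset.sum_congr rfl fun i _ => by ring
  · intro x hx
    constructor
    · intro v
      rw [Finset.mul_sum]
      apply Finset.sum_le_sum
      intro i _
      have h2 := hess_ge hβ0 hβ2 (coord_sq_le hx i)
      have hv := sq_nonneg (v i)
      calc (1:ℝ)/2 * (v i)^2 = (v i)^2 * (1/2) := by ring
        _ ≤ (v i)^2 * (1 / Real.sqrt ((x i)^2 + β^2)) := mul_le_mul_of_nonneg_left h2 hv
        _ = (v i)^2 / Real.sqrt ((x i)^2 + β^2) := by ring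
    · intro i
      exact ⟨deriv2_f hβ0 (x i), hess_ge hβ0 hβ2 (coord_sq_le hx i)⟩
end

section
/- The coordinatewise mirror descent update for the hyperbolic entropy map can be written as X_i^{t+1} - X_i^t = ((sqrt((X_i^t)² + β²) + X_i^t)/2)·(e^{-ηG_i} - 1) - ((sqrt((X_i^t)² + β²) - X_i^t)/2)·(e^{ηG_i} - 1), where G_i = ∇F(X^t)_i; equivalently this is the EG± update X^t = U^t - V^t with U^{t+1} = U^t e^{-ηG}, V^{t+1} = V^t e^{ηG}, U_i^t V_i^t = β²/4. -/
/-- The coordinatewise hyperbolic-entropy mirror descent update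
`arsinh(x'/β) = arsinh(x/β) - ηG` can be rewritten in the stated explicit form, which is
the (unnormalized) EG± update with `u·v = β²/4`. -/
theorem stmt14 (β η x x' G : ℝ) (hβ : 0 < β)
    (hupd : Real.arsinh (x' / β) = Real.arsinh (x / β) - η * G) :
    x' - x = (Real.sqrt (x^2 + β^2) + x) / 2 * (Real.exp (-(η * G)) - 1)
        - (Real.sqrt (x^2 + β^2) - x) / 2 * (Real.exp (η * G) - 1)
    ∧ ((x + Real.sqrt (x^2 + β^2)) / 2) * ((-x + Real.sqrt (x^2 + β^2)) / 2) = β^2 / 4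
    ∧ x' = (x + Real.sqrt (x^2 + β^2)) / 2 * Real.exp (-(η * G))
        - (-x + Real.sqrt (x^2 + β^2)) / 2 * Real.exp (η * G) := by
  set s := Real.sqrt (x^2 + β^2) with hs
  have hs2 : s^2 = x^2 + β^2 := Real.sq_sqrt (by positivity)
  have h1 : x' / β = Real.sinh (Real.arsinh (x / β) - η * G) := by
    rw [← hupd, Real.sinh_arsinh]
  rw [Real.sinh_sub, Real.sinh_arsinh, Real.cosh_arsinh] at h1
  have hsq : Real.sqrt (1 + (x / β)^2) = s / β := by
    have h : 1 + (x / β)^2 = (x^2 + β^2) / β^2 := by field_simp; ring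
    rw [h, Real.sqrt_div (by positivity), Real.sqrt_sq hβ.le]
  rw [hsq] at h1
  have hx' : x' = x * Real.cosh (η * G) - s * Real.sinh (η * G) := by
    have := h1
    field_simp at this
    nlinarith [this]
  rw [Real.cosh_eq, Real.sinh_eq] at hx'
  refine ⟨by rw [hx']; ring, by nlinarith [hs2], by rw [hx']; ring⟩
end

section
/- Let a = (x + sqrt(x² + β²))/2 and b = (-x + sqrt(x² + β²))/2 for x ∈ ℝ, β > 0, and let G ∈ ℝ with |ηG| ≤ 1/2. Then the updated value x' = a e^{-ηG} - b e^{ηG} satisfies |x' - x| ≤ (3/2)η|G|·sqrt(x² + β²), and if additionally x ≥ 0 then |x' - x| ≥ (1/2)η|G|·x. -/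
lemma my_exp_taylor {u : ℝ} (h : |u| ≤ 1/2) :
    |Real.exp u - 1 - u| ≤ 3/4 * u^2 := by
  have h1 : |u| ≤ 1 := h.trans (by norm_num)
  have := Real.exp_bound h1 (n := 2) (by norm_num)
  simp [Finset.sum_range_succ] at this
  calc |Real.exp u - 1 - u| = |Real.exp u - (1 + u)| := by ring_nf
    _ ≤ |u|^2 * (3/(2*2)) := by convert this using 2 <;> norm_num
    _ = 3/4 * u^2 := by rw [sq_abs]; ring

lemma my_exp_up {u : ℝ} (h : |u| ≤ 1/2) : |Real.exp u - 1| ≤ 3/2 * |u| := by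
  have h1 := my_exp_taylor h
  have h2 : u^2 ≤ |u| * (1/2) := by
    rw [← sq_abs]; nlinarith [abs_nonneg u]
  have h3 : |Real.exp u - 1| ≤ |u| + |Real.exp u - 1 - u| := by
    have := abs_add_le u (Real.exp u - 1 - u); simpa [add_sub_cancel] using this
  nlinarith [abs_nonneg u]

lemma my_exp_lo {u : ℝ} (h : |u| ≤ 1/2) : 1/2 * |u| ≤ |Real.exp u - 1| := by
  have h1 := my_exp_taylor h
  have h2 : u^2 ≤ |u| * (1/2) := by
    rw [← sq_abs]; nlinarith [abs_nonneg u]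
  have h3 : |u| - |Real.exp u - 1 - u| ≤ |Real.exp u - 1| := by
    have := abs_sub_abs_le_abs_sub u (u - (Real.exp u - 1))
    have h4 : |u - (u - (Real.exp u - 1))| = |Real.exp u - 1| := by ring_nf
    have h5 : |u - (Real.exp u - 1)| = |Real.exp u - 1 - u| := abs_sub_comm _ _
    linarith [this, h4.le, h4.ge, h5.le]
  nlinarith [abs_nonneg u]

/-- One-step increment bounds for the one-dimensional hyperbolic-entropy mirror descent
update with `|ηG| ≤ 1/2`. -/
theorem stmt15 (β η x G : ℝ) (hβ : 0 < β) (hη : 0 < η) (hbound : |η * G| ≤ 1/2) :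
    |((x + Real.sqrt (x^2 + β^2)) / 2 * Real.exp (-(η * G))
        - (-x + Real.sqrt (x^2 + β^2)) / 2 * Real.exp (η * G)) - x|
      ≤ 3/2 * η * |G| * Real.sqrt (x^2 + β^2)
    ∧ (0 ≤ x →
        1/2 * η * |G| * x ≤
          |((x + Real.sqrt (x^2 + β^2)) / 2 * Real.exp (-(η * G))
            - (-x + Real.sqrt (x^2 + β^2)) / 2 * Real.exp (η * G)) - x|) := by
  set u := η * G with hu
  set s := Real.sqrt (x^2 + β^2) with hsdef
  have hs0 : 0 ≤ s := Real.sqrt_nonneg _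
  have hxs : |x| ≤ s := by
    rw [hsdef, ← Real.sqrt_sq_eq_abs]
    exact Real.sqrt_le_sqrt (by nlinarith)
  have hx1 : -s ≤ x := (abs_le.mp hxs).1
  have hx2 : x ≤ s := (abs_le.mp hxs).2
  have ha : 0 ≤ (x + s) / 2 := by linarith
  have hb : 0 ≤ (-x + s) / 2 := by linarith
  have hun : |-u| ≤ 1/2 := by rwa [abs_neg]
  have hup1 := my_exp_up hbound
  have hup2 := my_exp_up hun
  have hlo2 := my_exp_lo hun
  have habs : |u| = η * |G| := by rw [hu, abs_mul, abs_of_pos hη]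
  have key : (x + s) / 2 * Real.exp (-u) - (-x + s) / 2 * Real.exp u - x
      = (x + s) / 2 * (Real.exp (-u) - 1) - (-x + s) / 2 * (Real.exp u - 1) := by ring
  constructor
  · rw [key]
    calc |(x + s) / 2 * (Real.exp (-u) - 1) - (-x + s) / 2 * (Real.exp u - 1)|
        ≤ |(x + s) / 2 * (Real.exp (-u) - 1)| + |(-x + s) / 2 * (Real.exp u - 1)| :=
          abs_sub _ _
      _ = (x + s) / 2 * |Real.exp (-u) - 1| + (-x + s) / 2 * |Real.exp u - 1| := by
          rw [abs_mul, abs_mul, abs_of_nonneg ha, abs_of_nonneg hb]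
      _ ≤ (x + s) / 2 * (3/2 * |u|) + (-x + s) / 2 * (3/2 * |u|) := by
          have := mul_le_mul_of_nonneg_left (hup2.trans_eq (by rw [abs_neg])) ha
          have := mul_le_mul_of_nonneg_left hup1 hb
          linarith
      _ = 3/2 * |u| * s := by ring
      _ = 3/2 * η * |G| * s := by rw [habs]; ring
  · intro hx
    have hax : x ≤ (x + s) / 2 := by linarith
    rw [key]
    have hkey : (x + s) / 2 * |Real.exp (-u) - 1|
        ≤ |(x + s) / 2 * (Real.exp (-u) - 1) - (-x + s) / 2 * (Real.exp u - 1)| := by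
      rcases le_or_gt 0 u with hu0 | hu0
      · have h1 : Real.exp (-u) ≤ 1 := Real.exp_le_one_iff.mpr (by linarith)
        have h2 : (1:ℝ) ≤ Real.exp u := by
          rw [← Real.exp_zero]; exact Real.exp_le_exp.mpr hu0
        have t1 : (x + s) / 2 * (Real.exp (-u) - 1) ≤ 0 :=
          mul_nonpos_iff.mpr (Or.inl ⟨ha, by linarith⟩)
        have t2 : 0 ≤ (-x + s) / 2 * (Real.exp u - 1) := mul_nonneg hb (by linarith)
        rw [abs_of_nonpos (by linarith), abs_of_nonpos (by linarith)]
        nlinarith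
      · have h1 : (1:ℝ) ≤ Real.exp (-u) := by
          rw [← Real.exp_zero]; exact Real.exp_le_exp.mpr (by linarith)
        have h2 : Real.exp u ≤ 1 := Real.exp_le_one_iff.mpr hu0.le
        have t1 : 0 ≤ (x + s) / 2 * (Real.exp (-u) - 1) := mul_nonneg ha (by linarith)
        have t2 : (-x + s) / 2 * (Real.exp u - 1) ≤ 0 :=
          mul_nonpos_iff.mpr (Or.inl ⟨hb, by linarith⟩)
        rw [abs_of_nonneg (by linarith), abs_of_nonneg (by linarith)]
        nlinarith
    have hstep : 1/2 * |u| * x ≤ (x + s) / 2 * |Real.exp (-u) - 1| := by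
      have h6 := mul_le_mul_of_nonneg_right hlo2 ha
      rw [abs_neg] at h6
      have h7 := mul_le_mul_of_nonneg_left hax (by positivity : (0:ℝ) ≤ 1/2 * |u|)
      nlinarith
    calc 1/2 * η * |G| * x = 1/2 * |u| * x := by rw [habs]; ring
      _ ≤ _ := hstep.trans hkey
end

section
/- For the hyperbolic-entropy Bregman divergence with parameter 0 < β ≤ 1, and a k-sparse unit vector x* ∈ ℝⁿ (‖x*‖₂ = 1), the one-hot initialization X(0) with X_{I₀}(0) = θ̂/√3 ≤ 1 at a single coordinate I₀ and zeros elsewhere satisfies D_Φ(x*, X(0)) ≤ ‖x*‖₁ log(1/β) + 1. -/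
open Real Finset

private lemma arsinh_div_eq (u β : ℝ) (hβ : 0 < β) :
    Real.arsinh (u / β) = Real.log (u + Real.sqrt (u^2 + β^2)) - Real.log β := by
  have hsu : |u| < Real.sqrt (u^2 + β^2) := by
    rw [← Real.sqrt_sq_eq_abs]
    exact Real.sqrt_lt_sqrt (by positivity) (by nlinarith)
  have hpos : 0 < u + Real.sqrt (u^2 + β^2) := by
    cases abs_lt.1 hsu with | intro h1 h2 => linarith
  have hs : Real.sqrt (1 + (u/β)^2) = Real.sqrt (u^2 + β^2) / β := by
    rw [eq_div_iff hβ.ne', ← Real.sqrt_sq hβ.le, ← Real.sqrt_mul (by positivity)]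
    congr 1
    field_simp
    simp only [Real.sqrt_sq hβ.le]; ring
  rw [Real.arsinh, hs, ← add_div, Real.log_div hpos.ne' hβ.ne']

private lemma my_arsinh_le_self {u : ℝ} (hu : 0 ≤ u) : Real.arsinh u ≤ u := by
  calc Real.arsinh u ≤ Real.arsinh (Real.sinh u) := by
        gcongr; exact (Real.self_le_sinh_iff).2 hu
    _ = u := Real.arsinh_sinh u

-- log (v + sqrt (v^2+β^2)) ≤ v  for 0 ≤ v, 0 < β ≤ 1
private lemma log_bound {v β : ℝ} (hβ0 : 0 < β) (hβ1 : β ≤ 1) (hv0 : 0 ≤ v) :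
    Real.log (v + Real.sqrt (v^2 + β^2)) ≤ v := by
  have hβs : β ≤ Real.sqrt (v^2 + β^2) := by
    have := Real.sqrt_le_sqrt (show β^2 ≤ v^2 + β^2 by nlinarith)
    rwa [Real.sqrt_sq hβ0.le] at this
  have h1 : Real.log (v + Real.sqrt (v^2 + β^2)) ≤ Real.log (v + Real.sqrt (1 + v^2)) := by
    apply Real.log_le_log (by linarith)
    have : Real.sqrt (v^2 + β^2) ≤ Real.sqrt (1 + v^2) := by
      apply Real.sqrt_le_sqrt; nlinarith
    linarith
  calc Real.log (v + Real.sqrt (v^2 + β^2)) ≤ Real.log (v + Real.sqrt (1 + v^2)) := h1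
    _ = Real.arsinh v := rfl
    _ ≤ v := my_arsinh_le_self hv0

-- (sqrt(1+β^2) - β) * v^2 ≤ sqrt(v^2+β^2) - β  for  0 ≤ v ≤ 1
private lemma sqrt_gap {v β : ℝ} (hβ0 : 0 < β) (hv0 : 0 ≤ v) (hv1 : v ≤ 1) :
    (Real.sqrt (1 + β^2) - β) * v^2 ≤ Real.sqrt (v^2 + β^2) - β := by
  have hs2 : (Real.sqrt (v^2 + β^2))^2 = v^2 + β^2 := Real.sq_sqrt (by positivity)
  have hs12 : (Real.sqrt (1 + β^2))^2 = 1 + β^2 := Real.sq_sqrt (by positivity)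
  have hsβ : β ≤ Real.sqrt (v^2 + β^2) := by
    have := Real.sqrt_le_sqrt (show β^2 ≤ v^2 + β^2 by nlinarith)
    rwa [Real.sqrt_sq hβ0.le] at this
  have hss1 : Real.sqrt (v^2 + β^2) ≤ Real.sqrt (1 + β^2) := by
    apply Real.sqrt_le_sqrt; nlinarith
  nlinarith [mul_nonneg (sub_nonneg.2 hsβ) (sub_nonneg.2 hss1),
    mul_nonneg (sub_nonneg.2 (le_trans hsβ hss1)) (sub_nonneg.2 hss1),
    sq_nonneg (Real.sqrt (v^2 + β^2) - β), sq_nonneg v]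

-- main per-coordinate bound, nonnegative case
private lemma keyA0 {v β : ℝ} (hβ0 : 0 < β) (hβ1 : β ≤ 1) (hv0 : 0 ≤ v) (hv1 : v ≤ 1) :
    v * Real.arsinh (v/β) - Real.sqrt (v^2 + β^2) + β
      ≤ v * Real.log (1/β) + (1 + β - Real.sqrt (1+β^2)) * v^2 := by
  rw [arsinh_div_eq v β hβ0]
  have h1 : v * Real.log (v + Real.sqrt (v^2 + β^2)) ≤ v * v :=
    mul_le_mul_of_nonneg_left (log_bound hβ0 hβ1 hv0) hv0
  have h2 := sqrt_gap hβ0 hv0 hv1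
  have h3 : v * Real.log (1/β) = -(v * Real.log β) := by
    rw [one_div, Real.log_inv]; ring
  have h5 : v * (Real.log (v + Real.sqrt (v^2 + β^2)) - Real.log β)
      = v * Real.log (v + Real.sqrt (v^2 + β^2)) - v * Real.log β := by ring
  have h6 : v * v = v^2 := (sq v).symm
  linarith

private lemma keyA {u β : ℝ} (hβ0 : 0 < β) (hβ1 : β ≤ 1) (hu : |u| ≤ 1) :
    u * Real.arsinh (u/β) - Real.sqrt (u^2 + β^2) + β
      ≤ |u| * Real.log (1/β) + (1 + β - Real.sqrt (1+β^2)) * u^2 := by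
  have habs : u * Real.arsinh (u/β) = |u| * Real.arsinh (|u|/β) := by
    rcases abs_cases u with ⟨h, _⟩ | ⟨h, _⟩
    · rw [h]
    · rw [h, neg_div, Real.arsinh_neg]; ring
  have hsq : u^2 = |u|^2 := (sq_abs u).symm
  rw [habs, hsq]
  exact keyA0 hβ0 hβ1 (abs_nonneg u) hu

-- bound for the I₀ coordinate
private lemma keyT {x t β : ℝ} (hβ0 : 0 < β) (hβ1 : β ≤ 1) (hx0 : 0 ≤ x) (hx1 : x ≤ 1)
    (ht0 : 0 ≤ t) (ht1 : t ≤ 1) :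
    x * Real.arsinh (x/β) - Real.sqrt (x^2 + β^2) + Real.sqrt (t^2 + β^2)
        - x * Real.arsinh (t/β)
      ≤ x * Real.log (1/β) + (1 + β - Real.sqrt (1+β^2)) * x^2 + (Real.sqrt (1+β^2) - β) := by
  have hs1β : β ≤ Real.sqrt (1 + β^2) := by
    have := Real.sqrt_le_sqrt (show β^2 ≤ 1 + β^2 by nlinarith)
    rwa [Real.sqrt_sq hβ0.le] at this
  have hd1 : Real.sqrt (1 + β^2) ≤ 1 + β := by
    have := Real.sqrt_le_sqrt (show 1 + β^2 ≤ (1+β)^2 by nlinarith)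
    rwa [Real.sqrt_sq (by linarith)] at this
  rcases le_or_gt t x with h | h
  · -- t ≤ x
    have h1 : Real.sqrt (t^2 + β^2) ≤ Real.sqrt (x^2 + β^2) := by
      apply Real.sqrt_le_sqrt; nlinarith
    have h2 : 0 ≤ x * Real.arsinh (t/β) :=
      mul_nonneg hx0 (Real.arsinh_nonneg_iff.2 (by positivity))
    rw [arsinh_div_eq x β hβ0]
    have h3 : x * Real.log (x + Real.sqrt (x^2 + β^2)) ≤ x^2 := by
      nlinarith [mul_le_mul_of_nonneg_left (log_bound hβ0 hβ1 hx0) hx0]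
    have h4 : x * Real.log (1/β) = -(x * Real.log β) := by
      rw [one_div, Real.log_inv]; ring
    have h5 : x * (Real.log (x + Real.sqrt (x^2 + β^2)) - Real.log β)
        = x * Real.log (x + Real.sqrt (x^2 + β^2)) - x * Real.log β := by ring
    have h7 : x^2 ≤ (1 + β - Real.sqrt (1+β^2)) * x^2 + (Real.sqrt (1+β^2) - β) := by
      nlinarith [mul_nonneg (sub_nonneg.2 hs1β) (show (0:ℝ) ≤ 1 - x^2 by nlinarith)]
    linarith
  · -- x < t
    have h1 : x * Real.arsinh (x/β) ≤ x * Real.arsinh (t/β) := by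
      apply mul_le_mul_of_nonneg_left _ hx0
      exact Real.arsinh_le_arsinh.2 (by gcongr)
    have h2 : Real.sqrt (t^2 + β^2) ≤ Real.sqrt (1 + β^2) := by
      apply Real.sqrt_le_sqrt; nlinarith
    have h3 : β ≤ Real.sqrt (x^2 + β^2) := by
      have := Real.sqrt_le_sqrt (show β^2 ≤ x^2 + β^2 by nlinarith)
      rwa [Real.sqrt_sq hβ0.le] at this
    have h4 : 0 ≤ x * Real.log (1/β) :=
      mul_nonneg hx0 (Real.log_nonneg (by rw [le_div_iff₀ hβ0]; linarith))
    have h5 : 0 ≤ (1 + β - Real.sqrt (1+β^2)) * x^2 :=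
      mul_nonneg (by linarith) (sq_nonneg x)
    linarith

/-- Bound on the initial hyperbolic-entropy Bregman divergence for the one-hot
initialization of mirror descent applied to a `k`-sparse unit signal. -/
theorem stmt18 (n k : ℕ) (β : ℝ) (hβ0 : 0 < β) (hβ1 : β ≤ 1)
    (xstar : Fin n → ℝ)
    (hnorm : Real.sqrt (∑ i, (xstar i)^2) = 1)
    (hk : (Finset.univ.filter (fun i => xstar i ≠ 0)).card = k)
    (I₀ : Fin n) (θ : ℝ) (hθ : 0 ≤ θ) (hθ1 : θ / Real.sqrt 3 ≤ 1)
    (hsign : 0 ≤ xstar I₀)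
    (X0 : Fin n → ℝ) (hX0 : X0 = fun i => if i = I₀ then θ / Real.sqrt 3 else 0) :
    (∑ i, (xstar i * Real.arsinh (xstar i / β) - Real.sqrt ((xstar i)^2 + β^2))) -
      (∑ i, (X0 i * Real.arsinh (X0 i / β) - Real.sqrt ((X0 i)^2 + β^2))) -
      (∑ i, Real.arsinh (X0 i / β) * (xstar i - X0 i))
    ≤ (∑ i, |xstar i|) * Real.log (1 / β) + 1 := by
  subst hX0
  set t := θ / Real.sqrt 3 with hT
  have ht0 : 0 ≤ t := div_nonneg hθ (Real.sqrt_nonneg 3)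
  have hsum : (∑ i, (xstar i)^2) = 1 := Real.sqrt_eq_one.mp hnorm
  have hle1 : ∀ i : Fin n, |xstar i| ≤ 1 := by
    intro i
    have h := Finset.single_le_sum (f := fun j => (xstar j)^2)
      (fun j _ => sq_nonneg _) (Finset.mem_univ i)
    rw [hsum] at h
    nlinarith [abs_nonneg (xstar i), sq_abs (xstar i)]
  rw [← Finset.sum_sub_distrib, ← Finset.sum_sub_distrib]
  simp only []
  have key : ∀ i ∈ Finset.univ,
      (xstar i * Real.arsinh (xstar i / β) - Real.sqrt ((xstar i)^2 + β^2) -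
        ((if i = I₀ then t else 0) * Real.arsinh ((if i = I₀ then t else 0) / β) -
          Real.sqrt ((if i = I₀ then t else 0)^2 + β^2)) -
        Real.arsinh ((if i = I₀ then t else 0) / β) * (xstar i - (if i = I₀ then t else 0)))
      ≤ |xstar i| * Real.log (1/β) + (1 + β - Real.sqrt (1+β^2)) * (xstar i)^2 +
        (if i = I₀ then (Real.sqrt (1+β^2) - β) else 0) := by
    intro i _
    by_cases hi : i = I₀
    · subst hi
      simp only [eq_self_iff_true, if_true]
      have hx1 : xstar i ≤ 1 := (abs_le.1 (hle1 i)).2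
      have := keyT (x := xstar i) (t := t) hβ0 hβ1 hsign hx1 ht0 hθ1
      rw [abs_of_nonneg hsign]
      nlinarith [this]
    · simp only [if_neg hi]
      have h0 : Real.sqrt ((0:ℝ)^2 + β^2) = β := by
        rw [show (0:ℝ)^2 + β^2 = β^2 by ring, Real.sqrt_sq hβ0.le]
      rw [h0, zero_div, Real.arsinh_zero]
      have := keyA (u := xstar i) hβ0 hβ1 (hle1 i)
      linarith
  calc _ ≤ ∑ i, (|xstar i| * Real.log (1/β) + (1 + β - Real.sqrt (1+β^2)) * (xstar i)^2 +
        (if i = I₀ then (Real.sqrt (1+β^2) - β) else 0)) := Finset.sum_le_sum key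
    _ = (∑ i, |xstar i|) * Real.log (1/β) + (1 + β - Real.sqrt (1+β^2)) * (∑ i, (xstar i)^2)
        + (Real.sqrt (1+β^2) - β) := by
      rw [Finset.sum_add_distrib, Finset.sum_add_distrib, ← Finset.sum_mul, ← Finset.mul_sum,
        Finset.sum_ite_eq' Finset.univ I₀]
      simp
    _ ≤ (∑ i, |xstar i|) * Real.log (1/β) + 1 := by
      rw [hsum]; ring_nf; linarith
end
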